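/- arXiv:1209.3380 — 11 statements merged into one kernel-verified Lean document; each statement's English description precedes it below -/
import Mathlib

section
/- Let (m_n^{(k)})_{n≥2, k≥0} be defined by m_n^{(0)} = 1 for all n ≥ 2 and m_n^{(k)} = (2k/(n(n−1))) Σ_{m=2}^n m_m^{(k−1)} for n ≥ 2 and k ≥ 1. Then m_n^{(2)} = 8(h_n − 1)/(n(n−1)) for all n ≥ 2, where h_n = Σ_{i=1}^n 1/i is the n-th harmonic number. -/
/-!
Summing `m^{(0)} = 1` over `2 ≤ m ≤ n` gives `n - 1`, so the recursion yields `m_n^{(1)} = 2/n`.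
Summing `2/m` over `2 ≤ m ≤ n` gives `2(h_n - 1)`, and one more step of the recursion gives
`m_n^{(2)} = 4/(n(n-1)) · 2(h_n - 1)`.
-/

open Finset

lemma sum_Icc_two_eq_sum_Icc_one_sub {G : Type*} [AddCommGroup G] (f : ℕ → G) {n : ℕ}
    (hn : 1 ≤ n) : ∑ i ∈ Icc 2 n, f i = ∑ i ∈ Icc 1 n, f i - f 1 := by
  rw [← add_sum_Ioc_eq_sum_Icc hn, ← Icc_add_one_left_eq_Ioc, add_sub_cancel_left]
  rfl

lemma sum_Icc_two_one (n : ℕ) (hn : 1 ≤ n) : ∑ _m ∈ Icc 2 n, (1 : ℝ) = n - 1 := by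
  simp [sum_Icc_two_eq_sum_Icc_one_sub _ hn]

lemma kingman_first_moment (M : ℕ → ℕ → ℝ)
    (h0 : ∀ n : ℕ, 2 ≤ n → M n 0 = 1)
    (hrec : ∀ n : ℕ, 2 ≤ n → ∀ k : ℕ, 1 ≤ k →
      M n k = (2 * k / ((n : ℝ) * ((n : ℝ) - 1))) * ∑ m ∈ Finset.Icc 2 n, M m (k - 1))
    {n : ℕ} (hn : 2 ≤ n) : M n 1 = 2 / n := by
  have hn' : (2 : ℝ) ≤ n := by exact_mod_cast hn
  have hsum : ∑ m ∈ Icc 2 n, M m 0 = n - 1 := by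
    rw [sum_congr rfl fun m hm => h0 m (mem_Icc.mp hm).1, sum_Icc_two_one n (by omega)]
  rw [hrec n hn 1 le_rfl, hsum]
  field_simp [show (n : ℝ) - 1 ≠ 0 by linarith]
  norm_num

/-- For the moment recursion of the external branch lengths of the Kingman
coalescent, the second moments are `m_n^{(2)} = 8(h_n - 1)/(n(n-1))`,
where `h_n` is the `n`-th harmonic number. -/
theorem kingman_second_moment (M : ℕ → ℕ → ℝ)
    (h0 : ∀ n : ℕ, 2 ≤ n → M n 0 = 1)
    (hrec : ∀ n : ℕ, 2 ≤ n → ∀ k : ℕ, 1 ≤ k →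
      M n k = (2 * k / ((n : ℝ) * ((n : ℝ) - 1))) * ∑ m ∈ Finset.Icc 2 n, M m (k - 1)) :
    ∀ n : ℕ, 2 ≤ n →
      M n 2 = 8 * ((∑ i ∈ Finset.Icc 1 n, (1 : ℝ) / i) - 1) / ((n : ℝ) * ((n : ℝ) - 1)) := by
  intro n hn
  have hsum : ∑ m ∈ Icc 2 n, M m 1 = 2 * ((∑ i ∈ Icc 1 n, (1 : ℝ) / i) - 1) := by
    calc ∑ m ∈ Icc 2 n, M m 1
        = ∑ m ∈ Icc 2 n, 2 * ((1 : ℝ) / m) :=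
          sum_congr rfl fun m hm => by
            rw [kingman_first_moment M h0 hrec (mem_Icc.mp hm).1, mul_one_div]
      _ = 2 * ((∑ i ∈ Icc 1 n, (1 : ℝ) / i) - 1) := by
          rw [← mul_sum, sum_Icc_two_eq_sum_Icc_one_sub _ (by omega), Nat.cast_one, div_one]
  rw [hrec n hn 2 one_le_two, hsum]
  ring
end

section
/- Let (m_n^{(k)})_{n≥2, k≥0} be defined by m_n^{(0)} = 1 for all n ≥ 2 and m_n^{(k)} = (2k/(n(n−1))) Σ_{m=2}^n m_m^{(k−1)} for n ≥ 2 and k ≥ 1. Then m_n^{(3)} = (48/(n(n−1)))(1 − h_n/n) for all n ≥ 2, where h_n = Σ_{i=1}^n 1/i is the n-th harmonic number. -/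
/-!
Unrolling the recursion three times gives `m_n^{(1)} = 2/n`, then
`m_n^{(2)} = 8 (h_n - 1)/(n(n-1))`, and finally a sum of `(h_m - 1)/(m(m-1))`, which telescopes
because `(h_m - 1)/(m(m-1)) = h_{m-1}/(m-1) - h_m/m`.
-/

open Finset

lemma harmonic_cast_real_eq_sum_Icc (n : ℕ) :
    (harmonic n : ℝ) = ∑ i ∈ Icc 1 n, (1 : ℝ) / i := by
  simp [harmonic_eq_sum_Icc]

lemma sum_Icc_two_inv_eq_harmonic_sub_one {n : ℕ} (hn : 1 ≤ n) :
    ∑ m ∈ Icc 2 n, (m : ℝ)⁻¹ = harmonic n - 1 := by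
  induction n, hn using Nat.le_induction with
  | base => simp
  | succ n hn ih =>
    rw [sum_Icc_succ_top (by omega), ih, harmonic_succ]
    push_cast
    ring

lemma sum_Icc_two_harmonic_sub_one_div {n : ℕ} (hn : 1 ≤ n) :
    ∑ m ∈ Icc 2 n, ((harmonic m : ℝ) - 1) / (m * (m - 1)) = 1 - harmonic n / n := by
  induction n, hn using Nat.le_induction with
  | base => simp
  | succ n hn ih =>
    rw [sum_Icc_succ_top (by omega), ih, harmonic_succ]
    push_cast
    rw [add_sub_cancel_right]
    field_simp
    ring

def SatisfiesMomentRecursion (M : ℕ → ℕ → ℝ) : Prop :=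
  ∀ n : ℕ, 2 ≤ n → ∀ k : ℕ, 1 ≤ k →
    M n k = (2 * k / ((n : ℝ) * ((n : ℝ) - 1))) * ∑ m ∈ Icc 2 n, M m (k - 1)

namespace SatisfiesMomentRecursion

variable {M : ℕ → ℕ → ℝ}

lemma moment_succ_eq (hrec : SatisfiesMomentRecursion M) {k : ℕ} {f : ℕ → ℝ}
    (hf : ∀ n, 2 ≤ n → M n k = f n) {n : ℕ} (hn : 2 ≤ n) :
    M n (k + 1) = 2 * (k + 1) / (n * (n - 1)) * ∑ m ∈ Icc 2 n, f m := by
  rw [hrec n hn (k + 1) (by omega), Nat.add_sub_cancel,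
    sum_congr rfl fun m hm ↦ hf m (mem_Icc.1 hm).1]
  push_cast
  ring

lemma moment_one (hrec : SatisfiesMomentRecursion M) (h0 : ∀ n, 2 ≤ n → M n 0 = 1)
    {n : ℕ} (hn : 2 ≤ n) : M n 1 = 2 / n := by
  have hn1 : (n : ℝ) - 1 ≠ 0 := by
    have : (2 : ℝ) ≤ n := by exact_mod_cast hn
    linarith
  rw [hrec.moment_succ_eq h0 hn, sum_const, Nat.card_Icc, nsmul_one,
    Nat.cast_sub (by omega)]
  push_cast
  field_simp
  ring

lemma moment_two (hrec : SatisfiesMomentRecursion M) (h0 : ∀ n, 2 ≤ n → M n 0 = 1)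
    {n : ℕ} (hn : 2 ≤ n) : M n 2 = 8 / (n * (n - 1)) * (harmonic n - 1) := by
  rw [hrec.moment_succ_eq (fun _ ↦ hrec.moment_one h0) hn,
    ← sum_Icc_two_inv_eq_harmonic_sub_one (by omega), mul_sum, mul_sum]
  refine sum_congr rfl fun m _ ↦ ?_
  ring

lemma moment_three (hrec : SatisfiesMomentRecursion M) (h0 : ∀ n, 2 ≤ n → M n 0 = 1)
    {n : ℕ} (hn : 2 ≤ n) : M n 3 = 48 / (n * (n - 1)) * (1 - harmonic n / n) := by
  rw [hrec.moment_succ_eq (fun _ ↦ hrec.moment_two h0) hn,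
    ← sum_Icc_two_harmonic_sub_one_div (by omega), mul_sum, mul_sum]
  refine sum_congr rfl fun m _ ↦ ?_
  ring

end SatisfiesMomentRecursion

/-- For the moment recursion of the external branch lengths of the Kingman
coalescent, the third moments are `m_n^{(3)} = (48/(n(n-1)))(1 - h_n/n)`,
where `h_n` is the `n`-th harmonic number. -/
theorem kingman_third_moment (M : ℕ → ℕ → ℝ)
    (h0 : ∀ n : ℕ, 2 ≤ n → M n 0 = 1)
    (hrec : ∀ n : ℕ, 2 ≤ n → ∀ k : ℕ, 1 ≤ k →
      M n k = (2 * k / ((n : ℝ) * ((n : ℝ) - 1))) * ∑ m ∈ Finset.Icc 2 n, M m (k - 1)) :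
    ∀ n : ℕ, 2 ≤ n →
      M n 3 = (48 / ((n : ℝ) * ((n : ℝ) - 1)))
        * (1 - (∑ i ∈ Finset.Icc 1 n, (1 : ℝ) / i) / (n : ℝ)) := by
  intro n hn
  rw [SatisfiesMomentRecursion.moment_three hrec h0 hn, harmonic_cast_real_eq_sum_Icc]
end

section
/- Let (u_n)_{n≥2} be defined by u_2 = 2 and u_n = 8/(n²(n−1)) + ((n−2)(n−3)/(n(n−1))) u_{n−1} for n ≥ 3. Then u_n = 4(n² − 5n + 4 h_n)/(n (n−1)² (n−2)) for all n ≥ 3, where h_n = Σ_{i=1}^n 1/i is the n-th harmonic number. -/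
/-!
Multiplying the recursion by `n (n-1)² (n-2)` makes it telescope: the weighted sequence
`w n = n (n-1)² (n-2) u n` satisfies `w n = w (n-1) + 8 (n-1)(n-2)/n` for `n ≥ 3`, and `w 2 = 0`.
The sequence `4 (n² - 5n + 4 h_n)` satisfies the same recursion and also vanishes at `n = 2`.
-/

namespace Kingman

def SatisfiesRecursion (u : ℕ → ℝ) : Prop :=
  ∀ n : ℕ, 3 ≤ n →
    u n = 8 / ((n : ℝ) ^ 2 * ((n : ℝ) - 1))
      + (((n : ℝ) - 2) * ((n : ℝ) - 3) / ((n : ℝ) * ((n : ℝ) - 1))) * u (n - 1)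

def weighted (u : ℕ → ℝ) (n : ℕ) : ℝ :=
  n * (n - 1) ^ 2 * (n - 2) * u n

lemma harmonic_closedForm_succ (n : ℕ) :
    4 * (((n + 1 : ℕ) : ℝ) ^ 2 - 5 * ((n + 1 : ℕ) : ℝ) + 4 * (harmonic (n + 1) : ℝ)) =
      4 * ((n : ℝ) ^ 2 - 5 * n + 4 * harmonic n) + 8 * n * (n - 1) / (n + 1) := by
  rw [harmonic_succ]
  push_cast
  field_simp
  ring

lemma SatisfiesRecursion.weighted_succ {u : ℕ → ℝ} (hu : SatisfiesRecursion u) {n : ℕ}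
    (hn : 2 ≤ n) : weighted u (n + 1) = weighted u n + 8 * n * (n - 1) / (n + 1) := by
  have hn' : (2 : ℝ) ≤ n := by exact_mod_cast hn
  have hn0 : (n : ℝ) ≠ 0 := by positivity
  have hn1 : (n : ℝ) - 1 ≠ 0 := by linarith
  unfold weighted
  rw [hu (n + 1) (by omega), Nat.add_sub_cancel]
  push_cast
  field_simp
  ring

lemma SatisfiesRecursion.weighted_eq {u : ℕ → ℝ} (hu : SatisfiesRecursion u) {n : ℕ}
    (hn : 2 ≤ n) : weighted u n = 4 * ((n : ℝ) ^ 2 - 5 * n + 4 * harmonic n) := by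
  induction n, hn using Nat.le_induction with
  | base => norm_num [weighted, harmonic]
  | succ n hn ih => rw [hu.weighted_succ hn, ih, harmonic_closedForm_succ]

end Kingman

open Kingman in
theorem kingman_mixed_second_moment_general (u : ℕ → ℝ)
    (hrec : ∀ n : ℕ, 3 ≤ n →
      u n = 8 / ((n : ℝ) ^ 2 * ((n : ℝ) - 1))
        + (((n : ℝ) - 2) * ((n : ℝ) - 3) / ((n : ℝ) * ((n : ℝ) - 1))) * u (n - 1)) :
    ∀ n : ℕ, 3 ≤ n →
      u n = 4 * ((n : ℝ) ^ 2 - 5 * (n : ℝ) + 4 * ∑ i ∈ Finset.Icc 1 n, (1 : ℝ) / i)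
        / ((n : ℝ) * ((n : ℝ) - 1) ^ 2 * ((n : ℝ) - 2)) := by
  intro n hn
  have hn' : (3 : ℝ) ≤ n := by exact_mod_cast hn
  have hden : (n : ℝ) * (n - 1) ^ 2 * (n - 2) ≠ 0 := by
    have : (0 : ℝ) < n * (n - 1) ^ 2 * (n - 2) := by
      apply mul_pos (mul_pos _ _) <;> nlinarith
    exact this.ne'
  have hsum : ∑ i ∈ Finset.Icc 1 n, (1 : ℝ) / i = harmonic n := by
    simp [harmonic_eq_sum_Icc]
  rw [hsum, ← (show SatisfiesRecursion u from hrec).weighted_eq (by omega), weighted,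
    mul_div_cancel_left₀ _ hden]

/-- Exact formula `E(τ_{n,1}τ_{n,2}) = 4(n² - 5n + 4h_n)/(n(n-1)²(n-2))` for the
Kingman coalescent, characterized by the recursion for `u_n = E(τ_{n,1}τ_{n,2})`. -/
theorem kingman_mixed_second_moment (u : ℕ → ℝ) (h2 : u 2 = 2)
    (hrec : ∀ n : ℕ, 3 ≤ n →
      u n = 8 / ((n : ℝ) ^ 2 * ((n : ℝ) - 1))
        + (((n : ℝ) - 2) * ((n : ℝ) - 3) / ((n : ℝ) * ((n : ℝ) - 1))) * u (n - 1)) :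
    ∀ n : ℕ, 3 ≤ n →
      u n = 4 * ((n : ℝ) ^ 2 - 5 * (n : ℝ) + 4 * ∑ i ∈ Finset.Icc 1 n, (1 : ℝ) / i)
        / ((n : ℝ) * ((n : ℝ) - 1) ^ 2 * ((n : ℝ) - 2)) :=
  kingman_mixed_second_moment_general u hrec
end

section
/- For every integer n ≥ 4, 4(n² − 5n + 4 h_n)/(n (n−1)² (n−2)) − 4/n² < 0, where h_n = Σ_{i=1}^n 1/i is the n-th harmonic number. Consequently, for the Kingman coalescent the lengths of two randomly chosen external branches are negatively correlated for all n ≥ 4: Cov(τ_{n,1}, τ_{n,2}) = E(τ_{n,1}τ_{n,2}) − E(τ_{n,1})E(τ_{n,2}) < 0. -/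
/-!
Clearing the (positive) denominators turns the claim into `4 n h_n < n² + 5n - 2`, i.e.
`4 h_n < n + 5 - 2/n`. This holds with room to spare at `n = 4`, and it propagates by
induction because the right-hand side grows by `1 + 2/n - 2/(n+1) ≥ 4/(n+1)`, which is
`(n-1)(n-2) ≥ 0`.
-/

theorem four_mul_harmonic_lt {n : ℕ} (hn : 4 ≤ n) : 4 * harmonic n < n + 5 - 2 / n := by
  induction n, hn using Nat.le_induction with
  | base => simp [harmonic]; norm_num
  | succ n hn ih =>
    have hn4 : (4 : ℚ) ≤ n := by exact_mod_cast hn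
    have increment_le : 4 / ((n : ℚ) + 1) ≤ 1 + 2 / n - 2 / (n + 1) := by
      have : (0 : ℚ) ≤ (n - 1) * (n - 2) := mul_nonneg (by linarith) (by linarith)
      field_simp
      nlinarith
    rw [harmonic_succ]
    push_cast
    linarith [div_eq_mul_inv (4 : ℚ) (n + 1)]

theorem kingman_cov_neg_iff {x h : ℝ} (hx : 2 < x) :
    4 * (x ^ 2 - 5 * x + 4 * h) / (x * (x - 1) ^ 2 * (x - 2)) - 4 / x ^ 2 < 0 ↔
      4 * x * h < x ^ 2 + 5 * x - 2 := by
  have hD : 0 < x * (x - 1) ^ 2 * (x - 2) :=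
    mul_pos (mul_pos (by linarith) (pow_pos (by linarith) 2)) (by linarith)
  rw [sub_neg, div_lt_div_iff₀ hD (pow_pos (by linarith) 2)]
  constructor <;> intro h <;> nlinarith

/-- For the Kingman coalescent the lengths of two randomly chosen external
branches are negatively correlated for `n ≥ 4`:
`Cov(τ_{n,1}, τ_{n,2}) = 4(n² - 5n + 4h_n)/(n(n-1)²(n-2)) - 4/n² < 0`. -/
theorem kingman_negative_correlation (n : ℕ) (hn : 4 ≤ n) :
    4 * ((n : ℝ) ^ 2 - 5 * (n : ℝ) + 4 * ∑ i ∈ Finset.Icc 1 n, (1 : ℝ) / i)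
        / ((n : ℝ) * ((n : ℝ) - 1) ^ 2 * ((n : ℝ) - 2)) - 4 / (n : ℝ) ^ 2 < 0 := by
  have hn4 : (4 : ℝ) ≤ n := by exact_mod_cast hn
  have harmonic_eq : ∑ i ∈ Finset.Icc 1 n, (1 : ℝ) / i = harmonic n := by
    simp [harmonic_eq_sum_Icc]
  have harmonic_lt : 4 * (harmonic n : ℝ) < n + 5 - 2 / n := by
    have := (Rat.cast_lt (K := ℝ)).mpr (four_mul_harmonic_lt hn)
    push_cast at this
    exact this
  rw [harmonic_eq, kingman_cov_neg_iff (by linarith)]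
  have : (2 : ℝ) / n * n = 2 := div_mul_cancel₀ 2 (by positivity)
  nlinarith
end

section
/- Let (m_n^{(k)})_{n≥2, k≥0} be defined by m_n^{(0)} = 1 for all n ≥ 2 and m_n^{(k)} = (2k/(n(n−1))) Σ_{m=2}^n m_m^{(k−1)} for n ≥ 2, k ≥ 1, and for k ≥ 1 and |t| < 1 set g_k(t) = Σ_{n=2}^∞ m_n^{(k)} t^n. Then each of these power series converges for |t| < 1, g_1(t) = −2t − 2 log(1−t), and for every k ≥ 2 the function g_k is twice differentiable on (−1,1) with t² g_k''(t) = (2k/(1−t)) g_{k−1}(t) for all t ∈ (−1,1). -/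
/-!
Induction on `k` gives `|m_n^{(k)}| ≤ k!`, so every `g_k` is a power series of radius at least
one and can be differentiated termwise on `(-1, 1)`. Since `m_n^{(1)} = 2 / n`, `g_1` is a shifted
logarithm series. Multiplying the recursion by `n (n - 1) tⁿ` and summing over `n` gives
`t² g_k''(t) = 2k Σₙ (Σ_{m ≤ n} m_m^{(k-1)}) tⁿ`, the Cauchy product of `2k g_{k-1}` with the
geometric series `1 / (1 - t)`.
-/

open Finset

theorem summable_add_one_pow_mul_geometric {R : Type*} [NormedCommRing R] [CompleteSpace R]
    {r : R} (hr : ‖r‖ < 1) (p : ℕ) : Summable fun n : ℕ => ((n : R) + 1) ^ p * r ^ n := by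
  simp_rw [add_pow, one_pow, mul_one, sum_mul]
  exact summable_sum fun i _ =>
    ((summable_pow_mul_geometric_of_norm_lt_one i hr).mul_left (p.choose i : R)).congr
      fun n => by ring

section PowerSeries

variable {a : ℕ → ℝ} {C : ℝ} {p : ℕ}

theorem summable_norm_mul_pow (ha : ∀ n, |a n| ≤ C * ((n : ℝ) + 1) ^ p) (d : ℕ) {t : ℝ}
    (ht : |t| < 1) : Summable fun n => ‖a n * t ^ (n + d)‖ := by
  have hC : 0 ≤ C := by simpa using (abs_nonneg _).trans (ha 0)
  have hgeom := summable_add_one_pow_mul_geometric (R := ℝ) (by rwa [Real.norm_eq_abs, abs_abs]) p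
  refine .of_nonneg_of_le (fun n => norm_nonneg _) (fun n => ?_) (hgeom.mul_left C)
  rw [norm_mul, norm_pow, Real.norm_eq_abs, Real.norm_eq_abs, ← mul_assoc]
  exact mul_le_mul (ha n) (pow_le_pow_of_le_one (abs_nonneg t) ht.le (by omega)) (by positivity)
    (by positivity)

theorem hasDerivAt_tsum_mul_pow (ha : ∀ n, |a n| ≤ C * ((n : ℝ) + 1) ^ p) (d : ℕ) {t : ℝ}
    (ht : |t| < 1) :
    HasDerivAt (fun s : ℝ => ∑' n, a n * s ^ (n + d + 1))
      (∑' n : ℕ, ((n : ℝ) + d + 1) * a n * t ^ (n + d)) t := by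
  obtain ⟨r, htr, hr1⟩ := exists_between ht
  have hr0 : 0 ≤ r := (abs_nonneg t).trans htr.le
  have hC : 0 ≤ C := by simpa using (abs_nonneg _).trans (ha 0)
  have hu : Summable fun n : ℕ => C * (d + 1) * (((n : ℝ) + 1) ^ (p + 1) * r ^ n) :=
    (summable_add_one_pow_mul_geometric (R := ℝ) (by rwa [Real.norm_of_nonneg hr0]) _).mul_left _
  refine hasDerivAt_tsum_of_isPreconnected (g := fun n s => a n * s ^ (n + d + 1))
    (g' := fun n s => ((n : ℝ) + d + 1) * a n * s ^ (n + d)) hu Metric.isOpen_ball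
    (convex_ball (0 : ℝ) r).isPreconnected (fun n y _ => ?_) (fun n y hy => ?_)
    (Metric.mem_ball_self (htr.trans_le' (abs_nonneg t))) ?_
    (by rwa [mem_ball_zero_iff, Real.norm_eq_abs])
  · refine ((hasDerivAt_pow (n + d + 1) y).const_mul (a n)).congr_deriv ?_
    rw [Nat.add_sub_cancel]
    push_cast
    ring
  · rw [mem_ball_zero_iff, Real.norm_eq_abs] at hy
    have hpow : |y| ^ (n + d) ≤ r ^ n :=
      (pow_le_pow_left₀ (abs_nonneg y) hy.le _).trans (pow_le_pow_of_le_one hr0 hr1.le (by omega))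
    have hlin : (n : ℝ) + d + 1 ≤ (d + 1) * (n + 1) := by nlinarith [(n.cast_nonneg : (0 : ℝ) ≤ n)]
    calc ‖((n : ℝ) + d + 1) * a n * y ^ (n + d)‖ = ((n : ℝ) + d + 1) * |a n| * |y| ^ (n + d) := by
          rw [Real.norm_eq_abs, abs_mul, abs_mul, abs_pow, abs_of_nonneg (by positivity)]
      _ ≤ ((d + 1) * (n + 1)) * (C * ((n : ℝ) + 1) ^ p) * r ^ n := by gcongr; exact ha n
      _ = C * (d + 1) * (((n : ℝ) + 1) ^ (p + 1) * r ^ n) := by ring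
  · simp

theorem hasDerivAt_deriv_tsum_mul_pow_add_two (ha : ∀ n, |a n| ≤ C * ((n : ℝ) + 1) ^ p)
    {t : ℝ} (ht : |t| < 1) :
    HasDerivAt (deriv fun s : ℝ => ∑' n, a n * s ^ (n + 2))
      (∑' n : ℕ, ((n : ℝ) + 2) * ((n : ℝ) + 1) * a n * t ^ n) t := by
  have hfirst : ∀ s : ℝ, |s| < 1 → HasDerivAt (fun s : ℝ => ∑' n, a n * s ^ (n + 2))
      (∑' n : ℕ, ((n : ℝ) + 1 + 1) * a n * s ^ (n + 1)) s := by
    intro s hs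
    simpa using hasDerivAt_tsum_mul_pow ha 1 hs
  have hA : ∀ n : ℕ, |((n : ℝ) + 1 + 1) * a n| ≤ 2 * C * ((n : ℝ) + 1) ^ (p + 1) := fun n => by
    rw [abs_mul, abs_of_nonneg (by positivity)]
    calc ((n : ℝ) + 1 + 1) * |a n| ≤ (2 * ((n : ℝ) + 1)) * (C * ((n : ℝ) + 1) ^ p) := by
          gcongr
          · linarith [(n.cast_nonneg : (0 : ℝ) ≤ n)]
          · exact ha n
      _ = 2 * C * ((n : ℝ) + 1) ^ (p + 1) := by ring
  have hderiv : deriv (fun s : ℝ => ∑' n, a n * s ^ (n + 2)) =ᶠ[nhds t]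
      fun s => ∑' n : ℕ, ((n : ℝ) + 1 + 1) * a n * s ^ (n + 1) := by
    filter_upwards [(isOpen_lt continuous_abs continuous_const).mem_nhds ht] with s hs
    exact (hfirst s hs).deriv
  refine ((hasDerivAt_tsum_mul_pow hA 0 ht).congr_of_eventuallyEq hderiv).congr_deriv ?_
  refine tsum_congr fun n => ?_
  push_cast
  ring

end PowerSeries

theorem tsum_sum_range_mul_pow {𝕜 : Type*} [NormedField 𝕜] [CompleteSpace 𝕜] {b : ℕ → 𝕜}
    {t : 𝕜} (d : ℕ) (hb : Summable fun n => ‖b n * t ^ (n + d)‖) (ht : ‖t‖ < 1) :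
    ∑' n, (∑ i ∈ range (n + 1), b i) * t ^ (n + d) = (1 - t)⁻¹ * ∑' n, b n * t ^ (n + d) := by
  rw [← tsum_geometric_of_norm_lt_one ht, mul_comm,
    tsum_mul_tsum_eq_tsum_sum_range_of_summable_norm hb (summable_norm_geometric_of_norm_lt_one ht)]
  refine tsum_congr fun n => ?_
  rw [sum_mul]
  refine sum_congr rfl fun i hi => ?_
  rw [mul_assoc, ← pow_add]
  congr 2
  have := mem_range.1 hi
  omega

theorem hasSum_two_div_mul_pow_add_two {t : ℝ} (ht : |t| < 1) :
    HasSum (fun n : ℕ => 2 / ((n : ℝ) + 2) * t ^ (n + 2)) (-2 * t - 2 * Real.log (1 - t)) := by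
  have h := ((hasSum_nat_add_iff' 1).2 (Real.hasSum_pow_div_log_of_abs_lt_one ht)).mul_left 2
  rw [show -2 * t - 2 * Real.log (1 - t) = 2 * (-Real.log (1 - t) - t) by ring]
  simp only [range_one, sum_singleton, zero_add, pow_one, Nat.cast_zero, div_one] at h
  refine h.congr_fun fun n => ?_
  push_cast
  ring

theorem cast_card_Icc_two {n : ℕ} (hn : 2 ≤ n) : ((Icc 2 n).card : ℝ) = n - 1 := by
  rw [Nat.card_Icc, Nat.cast_sub (by omega)]
  push_cast
  ring

namespace Kingman

variable {M : ℕ → ℕ → ℝ}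

theorem abs_le_factorial (h0 : ∀ n : ℕ, 2 ≤ n → M n 0 = 1)
    (hrec : ∀ n : ℕ, 2 ≤ n → ∀ k : ℕ, 1 ≤ k →
      M n k = (2 * k / ((n : ℝ) * ((n : ℝ) - 1))) * ∑ m ∈ Finset.Icc 2 n, M m (k - 1))
    (k : ℕ) {n : ℕ} (hn : 2 ≤ n) : |M n k| ≤ k.factorial := by
  induction k generalizing n with
  | zero => simp [h0 n hn]
  | succ k ih =>
    have hn' : (2 : ℝ) ≤ n := by exact_mod_cast hn
    have hcoef : 0 ≤ 2 * ((k + 1 : ℕ) : ℝ) / ((n : ℝ) * ((n : ℝ) - 1)) :=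
      div_nonneg (by positivity) (mul_nonneg (by positivity) (by linarith))
    have hsum : |∑ m ∈ Icc 2 n, M m k| ≤ ((n : ℝ) - 1) * k.factorial := by
      calc |∑ m ∈ Icc 2 n, M m k| ≤ ∑ m ∈ Icc 2 n, (k.factorial : ℝ) :=
            (abs_sum_le_sum_abs _ _).trans (sum_le_sum fun m hm => ih (mem_Icc.1 hm).1)
        _ = ((n : ℝ) - 1) * k.factorial := by rw [sum_const, nsmul_eq_mul, cast_card_Icc_two hn]
    rw [hrec n hn (k + 1) (by omega), Nat.add_sub_cancel, abs_mul, abs_of_nonneg hcoef]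
    calc 2 * ((k + 1 : ℕ) : ℝ) / ((n : ℝ) * ((n : ℝ) - 1)) * |∑ m ∈ Icc 2 n, M m k|
        ≤ 2 * ((k + 1 : ℕ) : ℝ) / ((n : ℝ) * ((n : ℝ) - 1)) * (((n : ℝ) - 1) * k.factorial) := by
          gcongr
      _ = 2 / n * (k + 1).factorial := by
          rw [Nat.factorial_succ]
          push_cast
          field_simp [show (n : ℝ) - 1 ≠ 0 by linarith]
      _ ≤ (k + 1).factorial :=
          mul_le_of_le_one_left (by positivity) ((div_le_one (by linarith)).2 hn')

theorem first_eq_two_div (h0 : ∀ n : ℕ, 2 ≤ n → M n 0 = 1)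
    (hrec : ∀ n : ℕ, 2 ≤ n → ∀ k : ℕ, 1 ≤ k →
      M n k = (2 * k / ((n : ℝ) * ((n : ℝ) - 1))) * ∑ m ∈ Finset.Icc 2 n, M m (k - 1))
    {n : ℕ} (hn : 2 ≤ n) : M n 1 = 2 / n := by
  have hn' : (2 : ℝ) ≤ n := by exact_mod_cast hn
  rw [hrec n hn 1 le_rfl, sum_congr rfl fun m hm => h0 m (mem_Icc.1 hm).1, sum_const,
    nsmul_eq_mul, mul_one, cast_card_Icc_two hn]
  field_simp [show (n : ℝ) - 1 ≠ 0 by linarith]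
  norm_num

theorem mul_eq_sum_range
    (hrec : ∀ n : ℕ, 2 ≤ n → ∀ k : ℕ, 1 ≤ k →
      M n k = (2 * k / ((n : ℝ) * ((n : ℝ) - 1))) * ∑ m ∈ Finset.Icc 2 n, M m (k - 1))
    {k : ℕ} (hk : 1 ≤ k) (n : ℕ) :
    ((n : ℝ) + 2) * ((n : ℝ) + 1) * M (n + 2) k =
      2 * k * ∑ i ∈ range (n + 1), M (i + 2) (k - 1) := by
  rw [hrec (n + 2) (by omega) k hk, ← Ico_add_one_right_eq_Icc, sum_Ico_eq_sum_range,
    show n + 2 + 1 - 2 = n + 1 by omega]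
  simp_rw [add_comm 2]
  rw [Nat.cast_add, Nat.cast_two, show (n : ℝ) + 2 - 1 = n + 1 by ring]
  field_simp

end Kingman

/-- The generating functions `g_k(t) = Σ_{n≥2} m_n^{(k)} t^n` of the moments of
the external branch length of the Kingman coalescent converge for `|t| < 1`,
satisfy `g_1(t) = -2t - 2 log(1-t)`, and for `k ≥ 2` the differential equation
`t² g_k''(t) = (2k/(1-t)) g_{k-1}(t)` on `(-1,1)`. -/
theorem kingman_generating_functions (M : ℕ → ℕ → ℝ)
    (h0 : ∀ n : ℕ, 2 ≤ n → M n 0 = 1)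
    (hrec : ∀ n : ℕ, 2 ≤ n → ∀ k : ℕ, 1 ≤ k →
      M n k = (2 * k / ((n : ℝ) * ((n : ℝ) - 1))) * ∑ m ∈ Finset.Icc 2 n, M m (k - 1)) :
    (∀ k : ℕ, 1 ≤ k → ∀ t : ℝ, |t| < 1 →
        Summable (fun n : ℕ => M (n + 2) k * t ^ (n + 2))) ∧
    (∀ t : ℝ, |t| < 1 →
        ∑' n : ℕ, M (n + 2) 1 * t ^ (n + 2) = -2 * t - 2 * Real.log (1 - t)) ∧
    (∀ k : ℕ, 2 ≤ k → ∀ t ∈ Set.Ioo (-1 : ℝ) 1,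
        DifferentiableAt ℝ (fun s : ℝ => ∑' n : ℕ, M (n + 2) k * s ^ (n + 2)) t ∧
        DifferentiableAt ℝ (deriv (fun s : ℝ => ∑' n : ℕ, M (n + 2) k * s ^ (n + 2))) t ∧
        t ^ 2 * deriv (deriv (fun s : ℝ => ∑' n : ℕ, M (n + 2) k * s ^ (n + 2))) t
          = (2 * k / (1 - t)) * ∑' n : ℕ, M (n + 2) (k - 1) * t ^ (n + 2)) := by
  have hbound (k n : ℕ) : |M (n + 2) k| ≤ k.factorial * ((n : ℝ) + 1) ^ 0 := by
    simpa using Kingman.abs_le_factorial h0 hrec k (by omega : 2 ≤ n + 2)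
  have hsummable (k : ℕ) {t : ℝ} (ht : |t| < 1) :
      Summable fun n => ‖M (n + 2) k * t ^ (n + 2)‖ := summable_norm_mul_pow (hbound k) 2 ht
  refine ⟨fun k _ t ht => (hsummable k ht).of_norm, fun t ht => ?_, fun k hk t ht => ?_⟩
  · refine ((hasSum_two_div_mul_pow_add_two ht).congr_fun fun n => ?_).tsum_eq
    rw [Kingman.first_eq_two_div h0 hrec (by omega : 2 ≤ n + 2)]
    push_cast
    ring
  · replace ht : |t| < 1 := abs_lt.2 ht
    have hderiv2 := hasDerivAt_deriv_tsum_mul_pow_add_two (hbound k) ht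
    refine ⟨(hasDerivAt_tsum_mul_pow (hbound k) 1 ht).differentiableAt,
      hderiv2.differentiableAt, ?_⟩
    calc t ^ 2 * deriv (deriv fun s : ℝ => ∑' n : ℕ, M (n + 2) k * s ^ (n + 2)) t
        = 2 * k * ∑' n : ℕ, (∑ i ∈ range (n + 1), M (i + 2) (k - 1)) * t ^ (n + 2) := by
          rw [hderiv2.deriv, ← tsum_mul_left, ← tsum_mul_left]
          refine tsum_congr fun n => ?_
          linear_combination t ^ (n + 2) * Kingman.mul_eq_sum_range hrec (k := k) (by omega) n
      _ = (2 * k / (1 - t)) * ∑' n : ℕ, M (n + 2) (k - 1) * t ^ (n + 2) := by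
          rw [tsum_sum_range_mul_pow 2 (hsummable (k - 1) ht) (by rwa [Real.norm_eq_abs])]
          ring
end

section
/- For every real t with |t| < 1, Σ_{n=2}^∞ (8(h_n − 1)/(n(n−1))) t^n = 8t − 4(1−t)(log(1−t))² − 8(1−t) Σ_{k=1}^∞ t^k/k², where h_n = Σ_{i=1}^n 1/i is the n-th harmonic number. -/
/-!
Squaring the logarithmic series `-log (1 - t) = ∑ tⁿ⁺¹/(n+1)` as a Cauchy product and splitting
`1/((i+1)(j+1)) = (1/(i+1) + 1/(j+1))/(i+j+2)` gives `log² (1 - t) = ∑ 2 hₙ tⁿ⁺¹/(n+1)`;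
adding `Li₂` and using `hₙ₊₁ = hₙ + 1/(n+1)` yields
`S(t) := ∑ hₙ₊₁ tⁿ⁺¹/(n+1) = log² (1 - t)/2 + Li₂ t`.
The coefficients telescope, `(hₙ₊₂ - 1)/((n+2)(n+1)) = hₙ₊₁/(n+1) - hₙ₊₂/(n+2)`, so the
generating function equals `8 t S(t) - 8 (S(t) - t) = 8 t - 8 (1 - t) S(t)`.
-/

open Finset Real

noncomputable def dilog (t : ℝ) : ℝ := ∑' k : ℕ, t ^ (k + 1) / ((k : ℝ) + 1) ^ 2

lemma sum_antidiagonal_one_div_succ_mul_succ (n : ℕ) :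
    ∑ p ∈ antidiagonal n, (1 : ℝ) / ((p.1 + 1) * (p.2 + 1)) = 2 * harmonic (n + 1) / (n + 2) := by
  have hsplit : ∀ p ∈ antidiagonal n, (1 : ℝ) / ((p.1 + 1) * (p.2 + 1))
      = (1 / (p.1 + 1) + 1 / (p.2 + 1)) / (n + 2) := by
    intro p hp
    have : (n : ℝ) + 2 = (p.1 + 1) + (p.2 + 1) := by
      rw [← mem_antidiagonal.mp hp]; push_cast; ring
    rw [this]
    field_simp
    ring
  have hharm : ∑ p ∈ antidiagonal n, (1 : ℝ) / (p.1 + 1) = harmonic (n + 1) := by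
    rw [Nat.sum_antidiagonal_eq_sum_range_succ_mk]
    simp [harmonic]
  have hswap : ∑ p ∈ antidiagonal n, (1 : ℝ) / (p.2 + 1)
      = ∑ p ∈ antidiagonal n, (1 : ℝ) / (p.1 + 1) :=
    Nat.sum_antidiagonal_swap (f := fun p => (1 : ℝ) / (p.1 + 1))
  rw [sum_congr rfl hsplit, ← sum_div, sum_add_distrib, hswap, hharm]
  ring

lemma summable_norm_pow_succ_div_succ {t : ℝ} (ht : |t| < 1) :
    Summable fun n : ℕ => ‖t ^ (n + 1) / (n + 1)‖ := by
  have := (hasSum_pow_div_log_of_abs_lt_one (x := |t|) (by rwa [abs_abs])).summable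
  refine this.congr fun n => ?_
  rw [norm_div, norm_pow, Real.norm_eq_abs, Real.norm_of_nonneg (by positivity)]

lemma hasSum_log_one_sub_sq {t : ℝ} (ht : |t| < 1) :
    HasSum (fun n : ℕ => 2 * harmonic n / (n + 1) * t ^ (n + 1)) (log (1 - t) ^ 2) := by
  have hf := hasSum_pow_div_log_of_abs_lt_one ht
  have hfn := summable_norm_pow_succ_div_succ ht
  have h := (summable_sum_mul_antidiagonal_of_summable_norm' hfn hf.summable hfn hf.summable).hasSum
  rw [← tsum_mul_tsum_eq_tsum_sum_antidiagonal_of_summable_norm hfn hfn, hf.tsum_eq, neg_mul_neg,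
    ← sq] at h
  refine (hasSum_nat_add_iff' 1).mp ?_
  simp only [sum_range_one, harmonic_zero, Rat.cast_zero, mul_zero, zero_div, zero_mul, sub_zero]
  refine h.congr_fun fun n => ?_
  rw [show ((n + 1 : ℕ) : ℝ) + 1 = n + 2 by push_cast; ring,
    ← sum_antidiagonal_one_div_succ_mul_succ, sum_mul]
  refine sum_congr rfl fun p hp => ?_
  rw [← mem_antidiagonal.mp hp]
  field_simp
  ring

lemma summable_pow_succ_div_succ_sq {t : ℝ} (ht : |t| ≤ 1) :
    Summable fun n : ℕ => t ^ (n + 1) / ((n : ℝ) + 1) ^ 2 := by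
  have hinv : Summable fun n : ℕ => 1 / ((n : ℝ) + 1) ^ 2 := by
    exact_mod_cast (summable_nat_add_iff 1).mpr (Real.summable_one_div_nat_pow.mpr one_lt_two)
  refine hinv.of_norm_bounded fun n => ?_
  rw [norm_div, norm_pow, Real.norm_eq_abs, Real.norm_of_nonneg (by positivity)]
  gcongr
  exact pow_le_one₀ (abs_nonneg t) ht

lemma hasSum_harmonic_mul_pow_div {t : ℝ} (ht : |t| < 1) :
    HasSum (fun n : ℕ => harmonic (n + 1) * t ^ (n + 1) / (n + 1))
      (log (1 - t) ^ 2 / 2 + dilog t) := by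
  have hLi : HasSum (fun n : ℕ => t ^ (n + 1) / ((n : ℝ) + 1) ^ 2) (dilog t) :=
    (summable_pow_succ_div_succ_sq ht.le).hasSum
  refine (((hasSum_log_one_sub_sq ht).div_const 2).add hLi).congr_fun fun n => ?_
  rw [harmonic_succ]
  push_cast
  field_simp

lemma harmonic_sub_one_div_eq_sub_div (n : ℕ) :
    ((harmonic (n + 2) : ℝ) - 1) / ((n + 2) * (n + 1))
      = harmonic (n + 1) / (n + 1) - harmonic (n + 2) / (n + 2) := by
  rw [harmonic_succ (n + 1)]
  push_cast
  field_simp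
  ring

/-- Closed form for the generating function of the second moments of the
external branch length of the Kingman coalescent:
`Σ_{n≥2} (8(h_n-1)/(n(n-1))) tⁿ = 8t - 4(1-t)log²(1-t) - 8(1-t)Li₂(t)`. -/
theorem kingman_g2_closed_form (t : ℝ) (ht : |t| < 1) :
    ∑' n : ℕ,
        (8 * ((∑ i ∈ Finset.Icc 1 (n + 2), (1 : ℝ) / i) - 1)
          / (((n : ℝ) + 2) * ((n : ℝ) + 1))) * t ^ (n + 2)
      = 8 * t - 4 * (1 - t) * (Real.log (1 - t)) ^ 2
        - 8 * (1 - t) * ∑' k : ℕ, t ^ (k + 1) / ((k : ℝ) + 1) ^ 2 := by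
  set S : ℕ → ℝ := fun n => harmonic (n + 1) * t ^ (n + 1) / (n + 1)
  have hS : HasSum S (log (1 - t) ^ 2 / 2 + dilog t) := hasSum_harmonic_mul_pow_div ht
  have hS_tail : HasSum (fun n => S (n + 1)) (log (1 - t) ^ 2 / 2 + dilog t - t) := by
    simpa [S] using (hasSum_nat_add_iff' 1).mpr hS
  have hsummand : ∀ n : ℕ,
      (8 * ((∑ i ∈ Finset.Icc 1 (n + 2), (1 : ℝ) / i) - 1)
        / (((n : ℝ) + 2) * ((n : ℝ) + 1))) * t ^ (n + 2) = 8 * t * S n - 8 * S (n + 1) := by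
    intro n
    have hH : ∑ i ∈ Icc 1 (n + 2), (1 : ℝ) / i = harmonic (n + 2) := by
      simp only [harmonic_eq_sum_Icc, Rat.cast_sum, Rat.cast_inv, Rat.cast_natCast, one_div]
    rw [hH, mul_div_assoc, harmonic_sub_one_div_eq_sub_div]
    simp only [S]
    push_cast
    ring
  rw [tsum_congr hsummand, ((hS.mul_left (8 * t)).sub (hS_tail.mul_left 8)).tsum_eq, dilog]
  ring
end

section
/- Let (a_n)_{n≥2} be the unique sequence satisfying a_n = 1/(n−1) + Σ_{m=2}^{n−1} ((m−1)/((n−1)(n−m)(n−m+1))) a_m for all n ≥ 2. Then for every z with 0 < z < 1 the series Σ_{n=2}^∞ a_n z^{n−1} converges and Σ_{n=2}^∞ a_n z^{n−1} = ∫₀^z t / ((1−t)² (−log(1−t))) dt. -/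
/-!
With `β k = (k + 1) a (k + 2)` the recursion becomes the renewal equation
`β k = 1 + ∑_{j < k} β j / ((k - j) (k - j + 1))`, that is `B = 1 / (1 - t) + B C` for the
generating functions `B t = ∑ β k t ^ k` and `C t = ∑ t ^ k / (k (k + 1)) = 1 - (1 - t) L(t) / t`.
Hence `B t = t / ((1 - t) ^ 2 L(t))`, and integrating `B` termwise over `[0, z]` gives
`∑ a (n + 2) z ^ (n + 1)`. By induction `0 ≤ β k ≤ k + 1`, since `∑ 1 / (k (k + 1)) ≤ 1`; this
gives the absolute convergence behind the Cauchy product and the exchange of sum and integral.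
-/

open MeasureTheory intervalIntegral

open Finset

theorem tsum_eq_add_tsum_mul_of_eq_add_sum_antidiagonal {R : Type*} [NormedRing R]
    [CompleteSpace R] {u v w : ℕ → R} (hu : Summable fun n => ‖u n‖)
    (hv : Summable fun n => ‖v n‖)
    (h : ∀ n, u n = w n + ∑ p ∈ antidiagonal n, u p.1 * v p.2) :
    ∑' n, u n = ∑' n, w n + (∑' n, u n) * ∑' n, v n := by
  have hconv := (summable_norm_sum_mul_antidiagonal_of_summable_norm hu hv).of_norm
  have hw : Summable w := by
    refine (hu.of_norm.sub hconv).congr fun n => ?_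
    rw [h n, add_sub_cancel_right]
  rw [tsum_mul_tsum_eq_tsum_sum_antidiagonal_of_summable_norm hu hv, ← hw.tsum_add hconv]
  exact tsum_congr h

theorem integral_tsum_mul_pow_of_nonneg {p : ℕ → ℝ} {z : ℝ} (hz : 0 ≤ z) (hp : ∀ k, 0 ≤ p k)
    (hsum : Summable fun k => p k * z ^ (k + 1) / (k + 1)) :
    ∫ t in (0 : ℝ)..z, ∑' k, p k * t ^ k = ∑' k, p k * z ^ (k + 1) / (k + 1) := by
  have hterm (k : ℕ) : ∫ t in Set.Ioc 0 z, p k * t ^ k = p k * z ^ (k + 1) / (k + 1) := by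
    rw [← integral_of_le hz, intervalIntegral.integral_const_mul, integral_pow]
    ring
  have hnorm (k : ℕ) : ∫ t in Set.Ioc 0 z, ‖p k * t ^ k‖ = p k * z ^ (k + 1) / (k + 1) := by
    rw [← hterm k]
    refine setIntegral_congr_fun measurableSet_Ioc fun t ht => ?_
    exact Real.norm_of_nonneg (mul_nonneg (hp k) (pow_nonneg ht.1.le k))
  rw [integral_of_le hz, ← integral_tsum_of_summable_integral_norm
    (fun k => (by fun_prop : Continuous fun t : ℝ => p k * t ^ k).integrableOn_Ioc)
    (by simpa only [hnorm] using hsum)]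
  exact tsum_congr hterm

namespace BolthausenSznitman

-- `invMulSucc 0 = 0⁻¹ = 0`, so a convolution with `invMulSucc` has no diagonal term.
noncomputable def invMulSucc (k : ℕ) : ℝ := ((k : ℝ) * (k + 1))⁻¹

lemma invMulSucc_zero : invMulSucc 0 = 0 := by simp [invMulSucc]

lemma invMulSucc_nonneg (k : ℕ) : 0 ≤ invMulSucc k := by
  unfold invMulSucc; positivity

lemma invMulSucc_le_one (k : ℕ) : invMulSucc k ≤ 1 := by
  rcases k.eq_zero_or_pos with rfl | hk
  · simp [invMulSucc_zero]
  · refine inv_le_one_of_one_le₀ ?_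
    have : (1 : ℝ) ≤ k := by exact_mod_cast hk
    nlinarith

lemma sum_range_invMulSucc_succ (K : ℕ) :
    ∑ k ∈ range K, invMulSucc (k + 1) = 1 - 1 / ((K : ℝ) + 1) := by
  induction K with
  | zero => simp
  | succ K ih =>
    rw [sum_range_succ, ih, invMulSucc]
    push_cast
    field_simp
    ring

lemma hasSum_invMulSucc_mul_pow {t : ℝ} (ht : |t| < 1) (ht0 : t ≠ 0) :
    HasSum (fun k => invMulSucc k * t ^ k) (1 - (1 - t) * -Real.log (1 - t) / t) := by
  set L := -Real.log (1 - t)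
  have hlog : HasSum (fun k : ℕ => t ^ (k + 1) / ((k : ℝ) + 1)) L :=
    Real.hasSum_pow_div_log_of_abs_lt_one ht
  have hlog' : HasSum (fun k : ℕ => t ^ (k + 2) / ((k : ℝ) + 2)) (L - t) := by
    have := (hasSum_nat_add_iff' (f := fun k : ℕ => t ^ (k + 1) / ((k : ℝ) + 1)) 1).mpr hlog
    simpa only [sum_range_one, zero_add, pow_one, Nat.cast_zero, div_one, Nat.cast_add,
      Nat.cast_one, add_assoc, one_add_one_eq_two] using this
  have hpartial : (fun k : ℕ => invMulSucc (k + 1) * t ^ (k + 1))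
      = fun k : ℕ => t ^ (k + 1) / ((k : ℝ) + 1) - t ^ (k + 2) / ((k : ℝ) + 2) / t := by
    funext k
    rw [invMulSucc]
    push_cast
    field_simp
    ring
  have hshift := hlog.sub (hlog'.div_const t)
  rw [← hpartial] at hshift
  have := (hasSum_nat_add_iff (f := fun k => invMulSucc k * t ^ k) 1).mp hshift
  rw [sum_range_one, invMulSucc_zero, zero_mul, add_zero] at this
  rwa [show 1 - (1 - t) * L / t = L - (L - t) / t by field_simp; ring]

lemma sum_range_invMulSucc_sub_le_one (k : ℕ) : ∑ j ∈ range k, invMulSucc (k - j) ≤ 1 :=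
  calc ∑ j ∈ range k, invMulSucc (k - j)
      = ∑ j ∈ range k, invMulSucc (k - 1 - j + 1) :=
        sum_congr rfl fun j hj => by rw [mem_range] at hj; congr 1; omega
    _ = 1 - 1 / ((k : ℝ) + 1) := by
        rw [sum_range_reflect (fun j => invMulSucc (j + 1)), sum_range_invMulSucc_succ]
    _ ≤ 1 := by
        have : (0 : ℝ) ≤ 1 / ((k : ℝ) + 1) := by positivity
        linarith

def IsRenewalSeq (β : ℕ → ℝ) : Prop :=
  ∀ k, β k = 1 + ∑ j ∈ range k, β j * invMulSucc (k - j)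

namespace IsRenewalSeq

variable {β : ℕ → ℝ}

lemma nonneg (hβ : IsRenewalSeq β) (k : ℕ) : 0 ≤ β k := by
  induction k using Nat.strong_induction_on with
  | _ k ih =>
    have := sum_nonneg fun j hj => mul_nonneg (ih j (mem_range.mp hj)) (invMulSucc_nonneg (k - j))
    rw [hβ k]
    linarith

lemma le_add_one (hβ : IsRenewalSeq β) (k : ℕ) : β k ≤ k + 1 := by
  induction k using Nat.strong_induction_on with
  | _ k ih =>
    have hterm : ∀ j ∈ range k, β j * invMulSucc (k - j) ≤ k * invMulSucc (k - j) := by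
      intro j hj
      have hjk : (j : ℝ) + 1 ≤ k := by exact_mod_cast mem_range.mp hj
      exact mul_le_mul_of_nonneg_right ((ih j (mem_range.mp hj)).trans hjk) (invMulSucc_nonneg _)
    calc β k ≤ 1 + k * ∑ j ∈ range k, invMulSucc (k - j) := by
          rw [hβ k, mul_sum]; exact add_le_add le_rfl (sum_le_sum hterm)
      _ ≤ 1 + k * 1 := by gcongr; exact sum_range_invMulSucc_sub_le_one k
      _ = k + 1 := by ring

lemma summable_norm_mul_pow (hβ : IsRenewalSeq β) {t : ℝ} (ht : |t| < 1) :
    Summable fun k => ‖β k * t ^ k‖ := by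
  have hgeom := summable_geometric_of_lt_one (abs_nonneg t) ht
  have hlin := summable_pow_mul_geometric_of_norm_lt_one 1 (r := |t|) (by rwa [norm_abs_eq_norm])
  refine (hlin.add hgeom).of_nonneg_of_le (fun k => norm_nonneg _) fun k => ?_
  rw [norm_mul, norm_pow, Real.norm_eq_abs, Real.norm_eq_abs, abs_of_nonneg (hβ.nonneg k),
    pow_one, ← add_one_mul]
  exact mul_le_mul_of_nonneg_right (hβ.le_add_one k) (by positivity)

lemma hasSum_mul_pow (hβ : IsRenewalSeq β) {t : ℝ} (ht : |t| < 1) (ht0 : t ≠ 0) :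
    HasSum (fun k => β k * t ^ k) (t / ((1 - t) ^ 2 * -Real.log (1 - t))) := by
  have hβs := hβ.summable_norm_mul_pow ht
  have hcs : Summable fun k => ‖invMulSucc k * t ^ k‖ := by
    refine (summable_geometric_of_lt_one (abs_nonneg t) ht).of_nonneg_of_le
      (fun k => norm_nonneg _) fun k => ?_
    rw [norm_mul, norm_pow, Real.norm_eq_abs, Real.norm_eq_abs,
      abs_of_nonneg (invMulSucc_nonneg k)]
    exact mul_le_of_le_one_left (by positivity) (invMulSucc_le_one k)
  have hconv : ∀ n, ∑ p ∈ antidiagonal n, β p.1 * t ^ p.1 * (invMulSucc p.2 * t ^ p.2)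
      = (β n - 1) * t ^ n := by
    intro n
    rw [Nat.sum_antidiagonal_eq_sum_range_succ (fun i j => β i * t ^ i * (invMulSucc j * t ^ j)),
      sum_range_succ, Nat.sub_self, invMulSucc_zero, zero_mul, mul_zero, add_zero, hβ n,
      add_sub_cancel_left, sum_mul]
    refine sum_congr rfl fun j hj => ?_
    rw [mul_mul_mul_comm, ← pow_add, Nat.add_sub_cancel' (mem_range.mp hj).le]
  have hren := tsum_eq_add_tsum_mul_of_eq_add_sum_antidiagonal (w := fun n => t ^ n) hβs hcs
    fun n => by rw [hconv n]; ring
  rw [tsum_geometric_of_abs_lt_one ht, (hasSum_invMulSucc_mul_pow ht ht0).tsum_eq] at hren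
  have h1t : 1 - t ≠ 0 := by linarith [le_abs_self t]
  have hlog : Real.log (1 - t) ≠ 0 :=
    Real.log_ne_zero_of_pos_of_ne_one (by linarith [le_abs_self t]) (by contrapose! ht0; linarith)
  rw [hβs.of_norm.hasSum_iff, eq_div_iff (by simp [h1t, hlog])]
  field_simp at hren
  linear_combination hren

end IsRenewalSeq

lemma isRenewalSeq_of_rec {a : ℕ → ℝ}
    (hrec : ∀ n : ℕ, 2 ≤ n →
      a n = 1 / ((n : ℝ) - 1)
        + ∑ m ∈ Icc 2 (n - 1),
            (((m : ℝ) - 1) / (((n : ℝ) - 1) * ((n : ℝ) - (m : ℝ)) * ((n : ℝ) - (m : ℝ) + 1)))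
              * a m) :
    IsRenewalSeq fun k => ((k : ℝ) + 1) * a (k + 2) := by
  intro k
  beta_reduce
  have hIcc : Icc 2 (k + 2 - 1) = Ico 2 (2 + k) := by ext m; simp only [mem_Icc, mem_Ico]; omega
  rw [hrec (k + 2) (by omega), hIcc, sum_Ico_eq_sum_range, Nat.add_sub_cancel_left, mul_add,
    mul_sum]
  push_cast
  have hk : (k : ℝ) + 2 - 1 = k + 1 := by ring
  congr 1
  · rw [hk, mul_one_div_cancel (by positivity)]
  refine sum_congr rfl fun j hj => ?_
  have hjk : j < k := mem_range.mp hj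
  have hkj : (0 : ℝ) < k - j := sub_pos.mpr (by exact_mod_cast hjk)
  rw [hk, show (k : ℝ) + 2 - (2 + j) = k - j by ring, show (2 : ℝ) + j - 1 = j + 1 by ring,
    add_comm 2 j, invMulSucc, Nat.cast_sub hjk.le]
  field_simp

end BolthausenSznitman

open BolthausenSznitman

/-- For the Bolthausen–Sznitman coalescent the generating function of the mean
external branch lengths `a_n = E(τ_{n,1})` satisfies
`Σ_{n≥2} a_n z^{n-1} = ∫₀^z t/((1-t)² L(t)) dt` with `L(t) = -log(1-t)`. -/
theorem bolthausen_sznitman_f1 (a : ℕ → ℝ)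
    (hrec : ∀ n : ℕ, 2 ≤ n →
      a n = 1 / ((n : ℝ) - 1)
        + ∑ m ∈ Finset.Icc 2 (n - 1),
            (((m : ℝ) - 1) / (((n : ℝ) - 1) * ((n : ℝ) - (m : ℝ)) * ((n : ℝ) - (m : ℝ) + 1)))
              * a m) :
    ∀ z : ℝ, 0 < z → z < 1 →
      Summable (fun n : ℕ => a (n + 2) * z ^ (n + 1)) ∧
      ∑' n : ℕ, a (n + 2) * z ^ (n + 1)
        = ∫ t in (0:ℝ)..z, t / ((1 - t) ^ 2 * (-Real.log (1 - t))) := by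
  intro z hz0 hz1
  set β : ℕ → ℝ := fun k => ((k : ℝ) + 1) * a (k + 2)
  have hβ : IsRenewalSeq β := isRenewalSeq_of_rec hrec
  have hterm (k : ℕ) : a (k + 2) * z ^ (k + 1) = β k * z ^ (k + 1) / (k + 1) := by
    simp only [β]; field_simp
  have hsummable : Summable fun n => a (n + 2) * z ^ (n + 1) := by
    refine (hβ.summable_norm_mul_pow (by rwa [abs_of_pos hz0])).of_norm.mul_left z
      |>.of_nonneg_of_le (fun k => ?_) fun k => ?_
    · rw [hterm]; have := hβ.nonneg k; positivity
    · have := hβ.nonneg k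
      calc a (k + 2) * z ^ (k + 1) = β k * z ^ (k + 1) / (k + 1) := hterm k
        _ ≤ β k * z ^ (k + 1) := div_le_self (by positivity) (by simp)
        _ = z * (β k * z ^ k) := by ring
  refine ⟨hsummable, ?_⟩
  calc ∑' n, a (n + 2) * z ^ (n + 1)
      = ∑' k, β k * z ^ (k + 1) / (k + 1) := tsum_congr hterm
    _ = ∫ t in (0:ℝ)..z, ∑' k, β k * t ^ k :=
        (integral_tsum_mul_pow_of_nonneg hz0.le hβ.nonneg (hsummable.congr hterm)).symm
    _ = ∫ t in (0:ℝ)..z, t / ((1 - t) ^ 2 * (-Real.log (1 - t))) := by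
        refine integral_congr_ae (ae_of_all _ fun t ht => ?_)
        rw [Set.uIoc_of_le hz0.le] at ht
        exact (hβ.hasSum_mul_pow (abs_lt.mpr ⟨by linarith [ht.1], by linarith [ht.2]⟩)
          ht.1.ne').tsum_eq
end

section
/- As z → 1 from the left, (1−z)·(−log(1−z)) · ∫₀^z t / ((1−t)² (−log(1−t))) dt → 1; equivalently, ∫₀^z t/((1−t)² L(t)) dt ∼ 1/((1−z)L(z)) as z ↗ 1, where L(z) = −log(1−z). -/
/-!
Write `L(t) = -log(1 - t)` and `H(t) = 1 / ((1 - t) L(t))`. Then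
`H' = (L - 1) / ((1 - t)² L²)`, which is asymptotic to the integrand `t / ((1 - t)² L)` as
`t ↗ 1` because `L → ∞`. Since `H → ∞`, integrating this equivalence (an integral form of
l'Hôpital's rule for `∞/∞`) gives `∫₀^z t / ((1 - t)² L(t)) dt ~ H(z)`.
-/

open MeasureTheory intervalIntegral Filter Set Topology Asymptotics

theorem abs_integral_sub_sub_le_of_abs_sub_le {f g G : ℝ → ℝ} {a z ε : ℝ} (haz : a ≤ z)
    (hcont : ContinuousOn G (Icc a z)) (hderiv : ∀ t ∈ Ioo a z, HasDerivAt G (g t) t)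
    (hg : ∀ t ∈ Ioo a z, 0 ≤ g t) (hfg : ∀ t ∈ Ioc a z, |f t - g t| ≤ ε * g t)
    (hf : IntervalIntegrable f volume a z) :
    |(∫ t in a..z, f t) - (G z - G a)| ≤ ε * (G z - G a) := by
  have hgi : IntervalIntegrable g volume a z :=
    (intervalIntegrable_iff_integrableOn_Ioc_of_le haz).2
      (integrableOn_deriv_of_nonneg hcont hderiv hg)
  rw [← integral_eq_sub_of_hasDerivAt_of_le haz hcont hderiv hgi, ← integral_sub hf hgi,
    ← intervalIntegral.integral_const_mul]
  exact norm_integral_le_of_norm_le haz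
    (ae_of_all _ fun t ht => (Real.norm_eq_abs _).trans_le (hfg t ht)) (hgi.const_mul ε)

theorem Asymptotics.IsEquivalent.intervalIntegral_of_hasDerivAt {f g G : ℝ → ℝ} {b c : ℝ}
    (hfg : f ~[𝓝[<] b] g) (hderiv : ∀ᶠ t in 𝓝[<] b, HasDerivAt G (g t) t)
    (hg : ∀ᶠ t in 𝓝[<] b, 0 ≤ g t) (hf : ∀ᶠ z in 𝓝[<] b, IntervalIntegrable f volume c z)
    (hG : Tendsto G (𝓝[<] b) atTop) :
    (fun z => ∫ t in c..z, f t) ~[𝓝[<] b] G := by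
  refine isLittleO_iff.2 fun ε hε => ?_
  have hfg' := isLittleO_iff.1 hfg.isLittleO (half_pos hε)
  obtain ⟨a, hab, hP⟩ := mem_nhdsLT_iff_exists_Ioo_subset.1 (hderiv.and (hg.and (hfg'.and hf)))
  obtain ⟨a', haa', ha'b⟩ := exists_between (mem_Iio.1 hab)
  -- On `[a', z]` the integral follows `G` up to `ε/2 · (G z - G a')`; the error `K` coming
  -- from `[c, a']` is fixed, so it is eventually below `ε/2 · G z` as `G z → ∞`.
  set K := |(∫ t in c..a', f t) - G a'| + ε / 2 * |G a'| with hK_def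
  filter_upwards [Ioo_mem_nhdsLT ha'b, hG.eventually_ge_atTop (2 * K / ε),
    hG.eventually_ge_atTop 0] with z hz hGzK hGz0
  have hsub : Icc a' z ⊆ Ioo a b := Icc_subset_Ioo haa' hz.2
  have hfa' : IntervalIntegrable f volume c a' := (hP ⟨haa', ha'b⟩).2.2.2
  have hfa'z : IntervalIntegrable f volume a' z :=
    hfa'.symm.trans (hP (hsub ⟨hz.1.le, le_rfl⟩)).2.2.2
  have hlocal := abs_integral_sub_sub_le_of_abs_sub_le (f := f) (G := G) (ε := ε / 2) hz.1.le
    (fun t ht => (hP (hsub ht)).1.continuousAt.continuousWithinAt)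
    (fun t ht => (hP (hsub (Ioo_subset_Icc_self ht))).1)
    (fun t ht => (hP (hsub (Ioo_subset_Icc_self ht))).2.1)
    (fun t ht => by
      obtain ⟨-, hgt, hfgt, -⟩ := hP (hsub (Ioc_subset_Icc_self ht))
      simpa [Real.norm_eq_abs, abs_of_nonneg hgt] using hfgt)
    hfa'z
  have hK : K ≤ ε / 2 * G z := by
    rw [div_le_iff₀ hε] at hGzK
    linarith
  simp only [Pi.sub_apply, Real.norm_eq_abs, abs_of_nonneg hGz0]
  rw [← integral_add_adjacent_intervals hfa' hfa'z]
  calc |(∫ t in c..a', f t) + (∫ t in a'..z, f t) - G z|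
      ≤ |(∫ t in c..a', f t) - G a'| + |(∫ t in a'..z, f t) - (G z - G a')| := by
        rw [show (∫ t in c..a', f t) + (∫ t in a'..z, f t) - G z
          = ((∫ t in c..a', f t) - G a') + ((∫ t in a'..z, f t) - (G z - G a')) by ring]
        exact abs_add_le _ _
    _ ≤ |(∫ t in c..a', f t) - G a'| + ε / 2 * (G z - G a') := by gcongr
    _ ≤ K + ε / 2 * G z := by
        have := mul_le_mul_of_nonneg_left (neg_le_abs (G a')) (half_pos hε).le
        linarith
    _ ≤ ε * G z := by linarith

theorem tendsto_one_sub_nhdsLT_one : Tendsto (fun t : ℝ => 1 - t) (𝓝[<] 1) (𝓝[>] 0) := by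
  refine tendsto_nhdsWithin_iff.2 ⟨?_, eventually_nhdsWithin_of_forall fun t ht =>
    mem_Ioi.2 (sub_pos.2 ht)⟩
  exact ((continuous_const.sub continuous_id).tendsto' 1 0 (sub_self 1)).mono_left
    nhdsWithin_le_nhds

theorem tendsto_neg_log_one_sub_nhdsLT_one :
    Tendsto (fun t : ℝ => -Real.log (1 - t)) (𝓝[<] 1) atTop :=
  tendsto_neg_atBot_atTop.comp (Real.tendsto_log_nhdsGT_zero.comp tendsto_one_sub_nhdsLT_one)

theorem tendsto_one_sub_mul_neg_log_one_sub_nhdsLT_one :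
    Tendsto (fun t : ℝ => (1 - t) * -Real.log (1 - t)) (𝓝[<] 1) (𝓝[>] 0) := by
  refine tendsto_nhdsWithin_iff.2 ⟨?_, ?_⟩
  · have h := (Real.continuous_negMulLog.tendsto 0).comp
      (tendsto_one_sub_nhdsLT_one.mono_right nhdsWithin_le_nhds)
    simpa only [Function.comp_def, Real.negMulLog, neg_mul, mul_neg, zero_mul, neg_zero] using h
  · filter_upwards [self_mem_nhdsWithin, tendsto_neg_log_one_sub_nhdsLT_one.eventually_gt_atTop 0]
      with t ht hL
    exact mul_pos (sub_pos.2 ht) hL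

theorem hasDerivAt_inv_one_sub_mul_neg_log_one_sub {t : ℝ} (ht : t < 1)
    (hL : Real.log (1 - t) ≠ 0) :
    HasDerivAt (fun s : ℝ => ((1 - s) * -Real.log (1 - s))⁻¹)
      ((-Real.log (1 - t) - 1) / ((1 - t) ^ 2 * (-Real.log (1 - t)) ^ 2)) t := by
  have h1t : 1 - t ≠ 0 := (sub_pos.2 ht).ne'
  have hsub : HasDerivAt (fun s : ℝ => 1 - s) (-1) t := (hasDerivAt_id t).const_sub 1
  have hlog : HasDerivAt (fun s : ℝ => Real.log (1 - s)) ((1 - t)⁻¹ * -1) t :=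
    (Real.hasDerivAt_log h1t).comp t hsub
  refine ((hsub.fun_mul hlog.fun_neg).fun_inv
    (mul_ne_zero h1t (neg_ne_zero.2 hL))).congr_deriv ?_
  field_simp
  ring

theorem div_one_sub_sq_mul_neg_log_isEquivalent :
    (fun t : ℝ => t / ((1 - t) ^ 2 * -Real.log (1 - t))) ~[𝓝[<] 1]
      fun t => (-Real.log (1 - t) - 1) / ((1 - t) ^ 2 * (-Real.log (1 - t)) ^ 2) := by
  have hL := tendsto_neg_log_one_sub_nhdsLT_one
  refine isEquivalent_of_tendsto_one ?_
  have hlim := (tendsto_nhdsWithin_of_tendsto_nhds tendsto_id).div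
    (tendsto_const_nhds.sub (tendsto_inv_atTop_zero.comp hL)) (by norm_num : (1 : ℝ) - 0 ≠ 0)
  rw [sub_zero, div_one] at hlim
  refine hlim.congr' ?_
  filter_upwards [self_mem_nhdsWithin, hL.eventually_gt_atTop 1] with t ht hLt
  simp only [Pi.div_apply, Function.comp_apply, id]
  generalize -Real.log (1 - t) = L at hLt ⊢
  have h1t : 1 - t ≠ 0 := (sub_pos.2 ht).ne'
  have hL0 : L ≠ 0 := by positivity
  have hL1 : L - 1 ≠ 0 := by linarith
  field_simp

theorem div_one_sub_sq_mul_neg_log_le {t : ℝ} (ht₀ : 0 < t) (ht₁ : t < 1) :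
    t / ((1 - t) ^ 2 * -Real.log (1 - t)) ≤ ((1 - t) ^ 2)⁻¹ := by
  have h1t : 0 < 1 - t := sub_pos.2 ht₁
  have hLt : t ≤ -Real.log (1 - t) := by linarith [Real.log_le_sub_one_of_pos h1t]
  have hL : 0 < -Real.log (1 - t) := ht₀.trans_le hLt
  rwa [div_le_iff₀ (by positivity), inv_mul_cancel_left₀ (by positivity)]

theorem intervalIntegrable_div_one_sub_sq_mul_neg_log {z : ℝ} (hz₀ : 0 ≤ z) (hz₁ : z < 1) :
    IntervalIntegrable (fun t : ℝ => t / ((1 - t) ^ 2 * -Real.log (1 - t))) volume 0 z := by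
  rw [intervalIntegrable_iff_integrableOn_Ioc_of_le hz₀]
  refine Measure.integrableOn_of_bounded (M := ((1 - z) ^ 2)⁻¹) measure_Ioc_lt_top.ne
    (by fun_prop : Measurable _).aestronglyMeasurable
    ((ae_restrict_iff' measurableSet_Ioc).2 (ae_of_all _ fun t ht => ?_))
  have ht₁ : t < 1 := ht.2.trans_lt hz₁
  have h1t : 0 < 1 - t := sub_pos.2 ht₁
  have hL : 0 ≤ -Real.log (1 - t) := by linarith [Real.log_le_sub_one_of_pos h1t, ht.1]
  rw [Real.norm_of_nonneg (div_nonneg ht.1.le (mul_nonneg (sq_nonneg _) hL))]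
  calc _ ≤ ((1 - t) ^ 2)⁻¹ := div_one_sub_sq_mul_neg_log_le ht.1 ht₁
    _ ≤ ((1 - z) ^ 2)⁻¹ := by gcongr; linarith [ht.2]

/-- Asymptotics of the generating function of the mean external branch lengths
of the Bolthausen–Sznitman coalescent:
`∫₀^z t/((1-t)² L(t)) dt ~ 1/((1-z) L(z))` as `z ↗ 1`, where `L(z) = -log(1-z)`. -/
theorem f1_asymptotics :
    Tendsto
      (fun z : ℝ => (1 - z) * (-Real.log (1 - z))
        * ∫ t in (0:ℝ)..z, t / ((1 - t) ^ 2 * (-Real.log (1 - t))))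
      (nhdsWithin 1 (Set.Iio 1)) (nhds 1) := by
  have hL := tendsto_neg_log_one_sub_nhdsLT_one
  have hH := tendsto_one_sub_mul_neg_log_one_sub_nhdsLT_one
  have hderiv : ∀ᶠ t in 𝓝[<] 1, HasDerivAt (fun s : ℝ => ((1 - s) * -Real.log (1 - s))⁻¹)
      ((-Real.log (1 - t) - 1) / ((1 - t) ^ 2 * (-Real.log (1 - t)) ^ 2)) t := by
    filter_upwards [self_mem_nhdsWithin, hL.eventually_gt_atTop 0] with t ht hLt
    exact hasDerivAt_inv_one_sub_mul_neg_log_one_sub ht (by linarith)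
  have hderiv_nonneg : ∀ᶠ t in 𝓝[<] 1,
      0 ≤ (-Real.log (1 - t) - 1) / ((1 - t) ^ 2 * (-Real.log (1 - t)) ^ 2) := by
    filter_upwards [hL.eventually_ge_atTop 1] with t hLt
    exact div_nonneg (by linarith) (by positivity)
  have hint : ∀ᶠ z in 𝓝[<] 1, IntervalIntegrable
      (fun t : ℝ => t / ((1 - t) ^ 2 * -Real.log (1 - t))) volume 0 z := by
    filter_upwards [Ioo_mem_nhdsLT zero_lt_one] with z hz
    exact intervalIntegrable_div_one_sub_sq_mul_neg_log hz.1.le hz.2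
  have hequiv := div_one_sub_sq_mul_neg_log_isEquivalent.intervalIntegral_of_hasDerivAt
    hderiv hderiv_nonneg hint hH.inv_tendsto_nhdsGT_zero
  have hH_ne : ∀ᶠ z in 𝓝[<] 1, ((1 - z) * -Real.log (1 - z))⁻¹ ≠ 0 := by
    filter_upwards [(tendsto_nhdsWithin_iff.1 hH).2] with z hz
    exact inv_ne_zero hz.out.ne'
  refine ((isEquivalent_iff_tendsto_one hH_ne).1 hequiv).congr fun z => ?_
  simp [div_eq_mul_inv, mul_comm]
end

section
/- Let (a_n)_{n≥2} be the unique sequence satisfying a_n = 1/(n−1) + Σ_{m=2}^{n−1} ((m−1)/((n−1)(n−m)(n−m+1))) a_m for all n ≥ 2. Then a_n · log n → 1 as n → ∞. -/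
/-!
With `b_n = (n - 1) a_n`, the generating function `B = ∑ₖ b_{k+2} Xᵏ` satisfies
`B (1 - X V) = 1 / (1 - X)`, where `V = ∑ⱼ Xʲ / ((j + 1) (j + 2))`. Partial fractions give
`1 - X V = (1 - X) L` with `L = ∑ⱼ Xʲ / (j + 1)`, so the increments `D = (1 - X) B` satisfy
`D = 1 + X D V` (hence `D ≥ 0` coefficientwise) and `D · L / (1 - X) = 1 / (1 - X)²`, that is
`∑_{i ≤ k} dᵢ H_{k-i+1} = k + 1` with harmonic numbers `H`. As `b_{k+2} = ∑_{i ≤ k} dᵢ` and `H`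
is increasing, `k + 1 ≤ b_{k+2} H_{k+1}` and `b_{k+2} H_{m+1} ≤ k + m + 1` for every `m`. The
first bound gives `a_n log n ≥ log n / (1 + log n)`; the second, with `m ≈ n / log n`, gives
`a_n log n ≤ (1 + 2 / log n) log n / (log n - log log n)`.
-/

open Filter Topology PowerSeries
open Finset hiding mk
open Real hiding mk

theorem harmonic_mono : Monotone harmonic :=
  monotone_nat_of_le_succ fun n => by
    rw [harmonic_succ]
    exact le_add_of_nonneg_right (by positivity)

theorem Finset.sum_Icc_eq_sum_range_add {M : Type*} [AddCommMonoid M] (f : ℕ → M) (a k : ℕ) :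
    ∑ m ∈ Icc a (k + a), f m = ∑ i ∈ range (k + 1), f (i + a) := by
  rw [← Ico_add_one_right_eq_Icc, sum_Ico_eq_sum_range, show k + a + 1 - a = k + 1 by omega]
  simp only [add_comm]

namespace PowerSeries

theorem coeff_mul_eq_sum_range {R : Type*} [CommSemiring R] (φ ψ : R⟦X⟧) (n : ℕ) :
    coeff n (φ * ψ) = ∑ i ∈ range (n + 1), coeff i φ * coeff (n - i) ψ := by
  rw [coeff_mul, Nat.sum_antidiagonal_eq_sum_range_succ (fun i j => coeff i φ * coeff j ψ)]

theorem one_sub_X_mul_mul_mk_one {R : Type*} [CommRing R] (φ : R⟦X⟧) :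
    (1 - X) * φ * mk 1 = φ := by
  linear_combination φ * (mk_one_mul_one_sub_eq_one (S := R))

theorem coeff_mk_one_sq {R : Type*} [CommRing R] (n : ℕ) :
    coeff n ((mk 1 : R⟦X⟧) ^ 2) = (n : R) + 1 := by
  rw [mk_one_pow_eq_mk_choose_add (S := R) (d := 1), coeff_mk, Nat.choose_one_right, add_comm,
    Nat.cast_add_one]

section Ordered

variable {R : Type*} [CommSemiring R] [PartialOrder R] [IsOrderedRing R]

theorem coeff_nonneg_of_eq_add_X_mul {C D V : R⟦X⟧}
    (hC : ∀ n, 0 ≤ coeff n C) (hV : ∀ n, 0 ≤ coeff n V) (hD : D = C + X * (D * V))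
    (n : ℕ) :
    0 ≤ coeff n D := by
  induction n using Nat.strong_induction_on with
  | _ n ih =>
    rw [hD, map_add]
    refine add_nonneg (hC n) ?_
    rcases n with _ | n
    · simp
    · rw [coeff_succ_X_mul, coeff_mul_eq_sum_range]
      exact sum_nonneg fun i hi => mul_nonneg (ih i (by simp at hi; omega)) (hV _)

variable {D G : R⟦X⟧} (hD : ∀ n, 0 ≤ coeff n D) (hG : Monotone fun n => coeff n G)
include hD hG

theorem coeff_mul_le_coeff_mul_mk_one_mul (n : ℕ) :
    coeff n (D * G) ≤ coeff n (D * mk 1) * coeff n G := by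
  simp only [coeff_mul_eq_sum_range, coeff_mk, Pi.one_apply, mul_one, sum_mul]
  exact sum_le_sum fun i _ => mul_le_mul_of_nonneg_left (hG (Nat.sub_le n i)) (hD i)

theorem coeff_mul_mk_one_mul_le_coeff_mul (hG₀ : ∀ n, 0 ≤ coeff n G) (k m : ℕ) :
    coeff k (D * mk 1) * coeff m G ≤ coeff (k + m) (D * G) := by
  simp only [coeff_mul_eq_sum_range, coeff_mk, Pi.one_apply, mul_one, sum_mul]
  calc ∑ i ∈ range (k + 1), coeff i D * coeff m G
      ≤ ∑ i ∈ range (k + 1), coeff i D * coeff (k + m - i) G :=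
        sum_le_sum fun i hi => mul_le_mul_of_nonneg_left (hG (by simp at hi; omega)) (hD i)
    _ ≤ ∑ i ∈ range (k + m + 1), coeff i D * coeff (k + m - i) G :=
        sum_le_sum_of_subset_of_nonneg (range_subset_range.2 (by omega))
          fun i _ _ => mul_nonneg (hD i) (hG₀ _)

end Ordered

end PowerSeries

namespace BolthausenSznitman

def MeanRecursion (a : ℕ → ℝ) : Prop :=
  ∀ n : ℕ, 2 ≤ n →
    a n = 1 / ((n : ℝ) - 1)
      + ∑ m ∈ Finset.Icc 2 (n - 1),
          (((m : ℝ) - 1) / (((n : ℝ) - 1) * ((n : ℝ) - (m : ℝ)) * ((n : ℝ) - (m : ℝ) + 1)))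
            * a m

noncomputable def invSuccSeries : ℝ⟦X⟧ := mk fun j => ((j : ℝ) + 1)⁻¹

noncomputable def mergerSeries : ℝ⟦X⟧ := mk fun j => (((j : ℝ) + 1) * ((j : ℝ) + 2))⁻¹

noncomputable def harmonicSeries : ℝ⟦X⟧ := mk fun j => (harmonic (j + 1) : ℝ)

noncomputable def bSeries (a : ℕ → ℝ) : ℝ⟦X⟧ := mk fun k => ((k : ℝ) + 1) * a (k + 2)

theorem one_sub_X_mul_invSuccSeries : (1 - X) * invSuccSeries = 1 - X * mergerSeries := by
  ext (_ | j)
  · simp [invSuccSeries]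
  · simp only [sub_mul, one_mul, map_sub, coeff_succ_X_mul, invSuccSeries, mergerSeries, coeff_mk,
      coeff_one, Nat.succ_ne_zero, if_false]
    push_cast
    field_simp
    ring

theorem one_sub_X_mul_harmonicSeries : (1 - X) * harmonicSeries = invSuccSeries := by
  ext (_ | j)
  · simp [harmonicSeries, invSuccSeries]
  · simp only [sub_mul, one_mul, map_sub, coeff_succ_X_mul, harmonicSeries, invSuccSeries,
      coeff_mk, harmonic_succ (j + 1)]
    push_cast
    ring

theorem coeff_mergerSeries_nonneg (n : ℕ) : 0 ≤ coeff n mergerSeries := by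
  rw [mergerSeries, coeff_mk]
  positivity

theorem coeff_harmonicSeries_nonneg (n : ℕ) : 0 ≤ coeff n harmonicSeries := by
  rw [harmonicSeries, coeff_mk]
  exact_mod_cast (harmonic_pos n.succ_ne_zero).le

theorem monotone_coeff_harmonicSeries : Monotone fun n => coeff n harmonicSeries := by
  intro m n h
  simp only [harmonicSeries, coeff_mk]
  exact_mod_cast harmonic_mono (Nat.succ_le_succ h)

theorem MeanRecursion.bSeries_mul_one_sub_X_mul_mergerSeries {a : ℕ → ℝ}
    (hrec : MeanRecursion a) :
    bSeries a * (1 - X * mergerSeries) = mk 1 := by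
  ext (_ | k)
  · norm_num [bSeries, hrec 2 le_rfl]
  · rw [mul_sub, mul_one, mul_left_comm, map_sub, coeff_succ_X_mul, coeff_mk, Pi.one_apply,
      coeff_mul_eq_sum_range, bSeries, coeff_mk, hrec (k + 3) (by omega),
      show k + 3 - 1 = k + 2 from rfl, sum_Icc_eq_sum_range_add, mul_add, mul_sum, add_sub_assoc,
      ← sum_sub_distrib, sum_eq_zero fun i hi => ?_, add_zero]
    · push_cast
      rw [show (k : ℝ) + 3 - 1 = k + 2 by ring]
      field_simp
      ring
    · have hik : i ≤ k := Nat.lt_succ_iff.mp (mem_range.mp hi)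
      have hik' : (i : ℝ) ≤ k := Nat.cast_le.mpr hik
      rw [mergerSeries, coeff_mk, coeff_mk, Nat.cast_sub hik]
      push_cast
      rw [show (k : ℝ) + 3 - 1 = k + 2 by ring, show (k : ℝ) + 3 - (i + 2) + 1 = k - i + 2 by ring,
        show (k : ℝ) + 3 - (i + 2) = k - i + 1 by ring]
      have h₁ : (k : ℝ) - i + 1 ≠ 0 := by linarith
      have h₂ : (k : ℝ) - i + 2 ≠ 0 := by linarith
      field_simp
      ring

section Increments

variable {B : ℝ⟦X⟧} (hB : B * (1 - X * mergerSeries) = mk 1)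
include hB

theorem one_sub_X_mul_eq_one_add_X_mul :
    (1 - X) * B = 1 + X * ((1 - X) * B * mergerSeries) := by
  linear_combination (1 - X) * hB + (mk_one_mul_one_sub_eq_one (S := ℝ))

theorem one_sub_X_mul_mul_harmonicSeries : (1 - X) * B * harmonicSeries = mk 1 ^ 2 := by
  linear_combination B * one_sub_X_mul_harmonicSeries
    - B * invSuccSeries * (mk_one_mul_one_sub_eq_one (S := ℝ))
    + mk 1 * B * one_sub_X_mul_invSuccSeries + mk 1 * hB

theorem coeff_one_sub_X_mul_nonneg (n : ℕ) : 0 ≤ coeff n ((1 - X) * B) :=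
  coeff_nonneg_of_eq_add_X_mul (fun n => by rw [coeff_one]; split_ifs <;> norm_num)
    coeff_mergerSeries_nonneg (one_sub_X_mul_eq_one_add_X_mul hB) n

theorem succ_le_coeff_mul_harmonic (n : ℕ) : (n : ℝ) + 1 ≤ coeff n B * harmonic (n + 1) := by
  have h := coeff_mul_le_coeff_mul_mk_one_mul (coeff_one_sub_X_mul_nonneg hB)
    monotone_coeff_harmonicSeries n
  rwa [one_sub_X_mul_mul_harmonicSeries hB, one_sub_X_mul_mul_mk_one B, coeff_mk_one_sq,
    harmonicSeries, coeff_mk] at h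

theorem coeff_mul_harmonic_le (k m : ℕ) : coeff k B * harmonic (m + 1) ≤ k + m + 1 := by
  have h := coeff_mul_mk_one_mul_le_coeff_mul (coeff_one_sub_X_mul_nonneg hB)
    monotone_coeff_harmonicSeries coeff_harmonicSeries_nonneg k m
  rwa [one_sub_X_mul_mul_harmonicSeries hB, one_sub_X_mul_mul_mk_one B, coeff_mk_one_sq,
    harmonicSeries, coeff_mk, Nat.cast_add] at h

end Increments

namespace MeanRecursion

variable {a : ℕ → ℝ} (hrec : MeanRecursion a)
include hrec

theorem one_le_mul_harmonic {n : ℕ} (hn : 2 ≤ n) : 1 ≤ a n * harmonic (n - 1) := by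
  obtain ⟨k, rfl⟩ := Nat.exists_eq_add_of_le' hn
  have h := succ_le_coeff_mul_harmonic hrec.bSeries_mul_one_sub_X_mul_mergerSeries k
  rw [bSeries, coeff_mk, mul_assoc] at h
  exact le_of_mul_le_mul_left (by rwa [mul_one]) (by positivity)

theorem nonneg {n : ℕ} (hn : 2 ≤ n) : 0 ≤ a n :=
  (pos_of_mul_pos_left (one_pos.trans_le (hrec.one_le_mul_harmonic hn))
    (by exact_mod_cast (harmonic_pos (by omega)).le)).le

theorem one_le_mul_one_add_log {n : ℕ} (hn : 2 ≤ n) : 1 ≤ a n * (1 + log n) := by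
  have hH : (harmonic (n - 1) : ℝ) ≤ 1 + log n := by
    refine (harmonic_le_one_add_log (n - 1)).trans ?_
    gcongr
    · exact Nat.cast_pos.mpr (by omega)
    · exact Nat.sub_le n 1
  exact (hrec.one_le_mul_harmonic hn).trans (mul_le_mul_of_nonneg_left hH (hrec.nonneg hn))

theorem mul_log_le {n : ℕ} (hn : 2 ≤ n) {y : ℝ} (hy : 0 ≤ y) :
    a n * log y ≤ 1 + y / (n - 1) := by
  obtain ⟨k, rfl⟩ := Nat.exists_eq_add_of_le' hn
  have h := coeff_mul_harmonic_le hrec.bSeries_mul_one_sub_X_mul_mergerSeries k ⌊y⌋₊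
  rw [bSeries, coeff_mk] at h
  have hlog : log y ≤ harmonic (⌊y⌋₊ + 1) :=
    (log_le_harmonic_floor y hy).trans (by exact_mod_cast harmonic_mono (Nat.le_succ _))
  have hk : (0 : ℝ) < k + 1 := by positivity
  rw [show ((k + 2 : ℕ) : ℝ) - 1 = k + 1 by push_cast; ring, ← mul_le_mul_iff_of_pos_left hk,
    mul_add, mul_one, mul_div_cancel₀ _ hk.ne']
  calc (k + 1 : ℝ) * (a (k + 2) * log y)
      ≤ (k + 1) * a (k + 2) * harmonic (⌊y⌋₊ + 1) := by
        rw [← mul_assoc]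
        exact mul_le_mul_of_nonneg_left hlog (mul_nonneg hk.le (hrec.nonneg hn))
    _ ≤ k + ⌊y⌋₊ + 1 := h
    _ ≤ k + 1 + y := by linarith [Nat.floor_le hy]

end MeanRecursion

end BolthausenSznitman

theorem tendsto_log_div_log_div_log :
    Tendsto (fun t : ℝ => log (t / log t) / log t) atTop (𝓝 1) := by
  have hloglog : Tendsto (fun t => log (log t) / log t) atTop (𝓝 0) :=
    isLittleO_log_id_atTop.tendsto_div_nhds_zero.comp tendsto_log_atTop
  refine (by simpa using (tendsto_const_nhds (x := (1 : ℝ))).sub hloglog :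
    Tendsto (fun t => 1 - log (log t) / log t) atTop (𝓝 1)).congr' ?_
  filter_upwards [tendsto_log_atTop.eventually_gt_atTop 0, eventually_gt_atTop 0] with t hlog ht
  rw [log_div ht.ne' hlog.ne', sub_div, div_self hlog.ne']

theorem tendsto_mul_log_of_bounds {x : ℕ → ℝ}
    (hlow : ∀ n ≥ 2, 1 ≤ x n * (1 + log n))
    (hup : ∀ n ≥ 2, ∀ y ≥ 0, x n * log y ≤ 1 + y / (n - 1)) :
    Tendsto (fun n => x n * log n) atTop (𝓝 1) := by
  have hlog : Tendsto (fun n : ℕ => log n) atTop atTop :=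
    tendsto_log_atTop.comp tendsto_natCast_atTop_atTop
  have hinv : Tendsto (fun n : ℕ => (log n)⁻¹) atTop (𝓝 0) :=
    tendsto_inv_atTop_zero.comp hlog
  have hratio : Tendsto (fun n : ℕ => log (n / log n) / log n) atTop (𝓝 1) :=
    tendsto_log_div_log_div_log.comp tendsto_natCast_atTop_atTop
  refine tendsto_of_tendsto_of_tendsto_of_le_of_le'
    (g := fun n : ℕ => (1 + (log n)⁻¹)⁻¹)
    (h := fun n : ℕ => (1 + 2 * (log n)⁻¹) / (log (n / log n) / log n))
    (by simpa using ((tendsto_const_nhds (x := (1 : ℝ))).add hinv).inv₀ (by norm_num))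
    (by have := ((tendsto_const_nhds (x := (1 : ℝ))).add (hinv.const_mul 2)).div hratio
          one_ne_zero
        rwa [mul_zero, add_zero, div_one] at this) ?_ ?_
  · filter_upwards [eventually_ge_atTop 2, hlog.eventually_gt_atTop 0] with n hn hpos
    have h := hlow n hn
    rw [inv_le_iff_one_le_mul₀ (by positivity), mul_add, mul_one, mul_assoc,
      mul_inv_cancel₀ hpos.ne', mul_one]
    linarith
  · filter_upwards [eventually_ge_atTop 2, hlog.eventually_gt_atTop 0,
      hratio.eventually_const_lt zero_lt_one] with n hn hpos hr
    have hn' : (2 : ℝ) ≤ n := by exact_mod_cast hn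
    rw [le_div_iff₀ hr, show x n * log n * (log (n / log n) / log n) = x n * log (n / log n) by
      field_simp]
    refine (hup n hn (n / log n) (by positivity)).trans ?_
    calc 1 + n / log n / (n - 1) = 1 + n / (n - 1) / log n := by rw [div_right_comm]
      _ ≤ 1 + 2 / log n := by
        gcongr
        rw [div_le_iff₀ (by linarith)]
        linarith
      _ = 1 + 2 * (log n)⁻¹ := by rw [div_eq_mul_inv]

/-- For the Bolthausen–Sznitman coalescent the mean external branch length
`a_n = E(τ_{n,1})` satisfies `a_n ~ 1/log n` as `n → ∞`. -/
theorem bolthausen_sznitman_mean_asymptotics (a : ℕ → ℝ)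
    (hrec : ∀ n : ℕ, 2 ≤ n →
      a n = 1 / ((n : ℝ) - 1)
        + ∑ m ∈ Finset.Icc 2 (n - 1),
            (((m : ℝ) - 1) / (((n : ℝ) - 1) * ((n : ℝ) - (m : ℝ)) * ((n : ℝ) - (m : ℝ) + 1)))
              * a m) :
    Tendsto (fun n : ℕ => a n * Real.log n) atTop (nhds 1) :=
  tendsto_mul_log_of_bounds
    (fun _ hn => BolthausenSznitman.MeanRecursion.one_le_mul_one_add_log hrec hn)
    (fun _ hn _ hy => BolthausenSznitman.MeanRecursion.mul_log_le hrec hn hy)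
end

section
/- Let (a_n)_{n≥2} satisfy a_n = 1/(n−1) + Σ_{m=2}^{n−1} ((m−1)/((n−1)(n−m)(n−m+1))) a_m for all n ≥ 2, and let (c_n)_{n≥2} be the unique sequence satisfying c_n = (2/(n−1)) a_n + Σ_{m=3}^{n−1} ((m−1)(m−2)/((n−1)²(n−m)(n−m+1))) c_m for all n ≥ 2 (so c_2 = 2). Then the power series f(z) = Σ_{n=2}^∞ c_n z^{n−1} converges for |z| < 1, and for every z with 0 < z < 1, f'(z) = (2/(−log(1−z))) ∫₀^z t / ((1−t)³ (−log(1−t))) dt. -/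
/-!
Write `α k = (k + 1) a (k + 2)`, `γ k = (k + 1) c (k + 2)` and `w l = 1 / ((l + 1) (l + 2))`.
The recursions become the convolution identities `α (m + 1) - 1 = ∑ α i w (m - i)` and
`(m + 2) γ (m + 1) - 2 α (m + 1) = ∑ i γ i w (m - i)`. Since `∑ w ≤ 1`, they give `|a n| ≤ 1`
and `|c n| ≤ 2`, so every series below converges on `|z| < 1`, and the convolutions turn into
products of generating functions. As `z (1 - z W(z)) = (1 - z) L(z)` for `W = ∑ w l z^l`, one
gets `A (1 - z) L = z / (1 - z)` and `G + (1 - z) L G' = 2 A`, where `A = ∑ α k z^k` and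
`G = ∑ γ k z^k = f'`. Hence `(L G)' = G / (1 - z) + L G' = 2 z / ((1 - z)^3 L)`, and integrating
from `0`, where `L` vanishes, gives the formula.
-/

open MeasureTheory intervalIntegral Finset

noncomputable def powerSeriesSum (b : ℕ → ℝ) (z : ℝ) : ℝ := ∑' k, b k * z ^ k

section Linear

variable {u v : ℕ → ℝ} {z : ℝ}

lemma powerSeriesSum_add (hu : Summable fun k => u k * z ^ k) (hv : Summable fun k => v k * z ^ k) :
    powerSeriesSum (fun k => u k + v k) z = powerSeriesSum u z + powerSeriesSum v z := by
  simp only [powerSeriesSum, add_mul]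
  exact hu.tsum_add hv

lemma powerSeriesSum_sub (hu : Summable fun k => u k * z ^ k) (hv : Summable fun k => v k * z ^ k) :
    powerSeriesSum (fun k => u k - v k) z = powerSeriesSum u z - powerSeriesSum v z := by
  simp only [powerSeriesSum, sub_mul]
  exact hu.tsum_sub hv

lemma powerSeriesSum_const_mul (r : ℝ) :
    powerSeriesSum (fun k => r * u k) z = r * powerSeriesSum u z := by
  simp only [powerSeriesSum, mul_assoc, tsum_mul_left]

end Linear

lemma summable_succ_pow_mul_geometric (p : ℕ) {r : ℝ} (hr : |r| < 1) :
    Summable fun k : ℕ => ((k : ℝ) + 1) ^ p * r ^ k := by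
  simp_rw [add_pow, one_pow, mul_one, sum_mul]
  refine summable_sum fun j _ => ?_
  simpa [mul_right_comm] using
    (summable_pow_mul_geometric_of_norm_lt_one j (r := r) (by simpa using hr)).mul_right
      (p.choose j : ℝ)

section PolyBounded

variable {b : ℕ → ℝ} {C : ℝ} {p : ℕ}

lemma summable_norm_mul_pow_s15 (hb : ∀ k, |b k| ≤ C * ((k : ℝ) + 1) ^ p) {z : ℝ}
    (hz : |z| < 1) :
    Summable fun k => ‖b k * z ^ k‖ := by
  refine .of_nonneg_of_le (fun k => norm_nonneg _) (fun k => ?_)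
    ((summable_succ_pow_mul_geometric p (r := |z|) (by rwa [abs_abs])).mul_left C)
  rw [Real.norm_eq_abs, abs_mul, abs_pow, ← mul_assoc]
  exact mul_le_mul_of_nonneg_right (hb k) (by positivity)

lemma powerSeriesSum_eq_add_mul {z : ℝ} (hs : Summable fun k => b k * z ^ k) :
    powerSeriesSum b z = b 0 + z * powerSeriesSum (fun k => b (k + 1)) z := by
  rw [powerSeriesSum, powerSeriesSum, hs.tsum_eq_zero_add, ← tsum_mul_left]
  simp only [pow_zero, mul_one, pow_succ]
  congr 1
  exact tsum_congr fun k => by ring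

lemma hasDerivAt_tsum_mul_pow_succ (hb : ∀ k, |b k| ≤ C * ((k : ℝ) + 1) ^ p) {z : ℝ}
    (hz : |z| < 1) :
    HasDerivAt (fun s => ∑' k, b k * s ^ (k + 1))
      (powerSeriesSum (fun k => ((k : ℝ) + 1) * b k) z) z := by
  obtain ⟨r, hzr, hr1⟩ := exists_between hz
  have hr : |r| < 1 := by rwa [abs_of_pos ((abs_nonneg z).trans_lt hzr)]
  refine hasDerivAt_tsum_of_isPreconnected (t := Metric.ball 0 r) (y₀ := 0)
    (g' := fun (k : ℕ) (s : ℝ) => ((k : ℝ) + 1) * b k * s ^ k)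
    ((summable_succ_pow_mul_geometric (p + 1) hr).mul_left C) Metric.isOpen_ball
    (convex_ball _ _).isPreconnected (fun k y _ => ?_) (fun k y hy => ?_) ?_ ?_ ?_
  · refine ((hasDerivAt_pow (k + 1) y).const_mul (b k)).congr_deriv ?_
    push_cast [Nat.add_sub_cancel]
    ring
  · have hy : |y| ≤ r := by simpa using (Metric.mem_ball.mp hy).le
    have hC : 0 ≤ C * ((k : ℝ) + 1) ^ p := (abs_nonneg _).trans (hb k)
    rw [Real.norm_eq_abs, abs_mul, abs_mul, abs_pow,
      abs_of_nonneg (by positivity : (0 : ℝ) ≤ k + 1)]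
    calc (k + 1) * |b k| * |y| ^ k ≤ (k + 1) * (C * ((k : ℝ) + 1) ^ p) * r ^ k := by
          gcongr
          exact hb k
      _ = C * (((k : ℝ) + 1) ^ (p + 1) * r ^ k) := by ring
  · exact Metric.mem_ball_self ((abs_nonneg z).trans_lt hzr)
  · simp
  · simpa using hzr

lemma abs_succ_le_mul_pow (hb : ∀ k, |b k| ≤ C * ((k : ℝ) + 1) ^ p) (k : ℕ) :
    |b (k + 1)| ≤ C * 2 ^ p * ((k : ℝ) + 1) ^ p := by
  have hC : 0 ≤ C := by simpa using (abs_nonneg _).trans (hb 0)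
  calc |b (k + 1)| ≤ C * (((k + 1 : ℕ) : ℝ) + 1) ^ p := hb _
    _ ≤ C * (2 * ((k : ℝ) + 1)) ^ p := by gcongr; push_cast; linarith
    _ = C * 2 ^ p * ((k : ℝ) + 1) ^ p := by rw [mul_pow]; ring

lemma hasDerivAt_powerSeriesSum (hb : ∀ k, |b k| ≤ C * ((k : ℝ) + 1) ^ p) {z : ℝ}
    (hz : |z| < 1) :
    HasDerivAt (powerSeriesSum b) (powerSeriesSum (fun k => ((k : ℝ) + 1) * b (k + 1)) z) z := by
  have hshift : (fun s => b 0 + ∑' k, b (k + 1) * s ^ (k + 1)) =ᶠ[nhds z] powerSeriesSum b := by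
    filter_upwards [Metric.isOpen_ball.mem_nhds (by simpa using hz : z ∈ Metric.ball (0 : ℝ) 1)]
      with s hs
    rw [powerSeriesSum, (summable_norm_mul_pow_s15 hb (by simpa using hs)).of_norm.tsum_eq_zero_add]
    simp
  exact ((hasDerivAt_tsum_mul_pow_succ (abs_succ_le_mul_pow hb) hz).const_add
    (b 0)).congr_of_eventuallyEq hshift.symm

end PolyBounded

lemma powerSeriesSum_eq_add_mul_mul_of_conv {x y w : ℕ → ℝ} {z : ℝ}
    (hy : Summable fun k => ‖y k * z ^ k‖) (hw : Summable fun k => ‖w k * z ^ k‖)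
    (hx : ∀ m, x (m + 1) = ∑ i ∈ range (m + 1), y i * w (m - i)) :
    powerSeriesSum x z = x 0 + z * (powerSeriesSum y z * powerSeriesSum w z) := by
  have hterm : ∀ n, ∑ i ∈ range (n + 1), y i * z ^ i * (w (n - i) * z ^ (n - i))
      = x (n + 1) * z ^ n := by
    intro n
    rw [hx, sum_mul]
    refine sum_congr rfl fun i hi => ?_
    rw [← Nat.add_sub_cancel' (Nat.lt_succ_iff.mp (mem_range.mp hi)), pow_add,
      Nat.add_sub_cancel_left]
    ring
  have hsucc : Summable fun n => x (n + 1) * z ^ n :=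
    (summable_norm_sum_mul_range_of_summable_norm hy hw).of_norm.congr hterm
  have hx : Summable fun k => x k * z ^ k :=
    (summable_nat_add_iff 1).mp ((hsucc.mul_left z).congr fun n => by ring)
  rw [powerSeriesSum_eq_add_mul hx]
  unfold powerSeriesSum
  rw [tsum_mul_tsum_eq_tsum_sum_range_of_summable_norm hy hw, tsum_congr hterm]

lemma abs_le_of_abs_succ_le_add_conv {x w : ℕ → ℝ} {R : ℝ} (hR : 0 ≤ R)
    (hw0 : ∀ l, 0 ≤ w l) (hw : ∀ n, ∑ l ∈ range n, w l ≤ 1)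
    (hx : ∀ m, |x (m + 1)| ≤ R + ∑ i ∈ range (m + 1), |x i| * w (m - i)) (k : ℕ) :
    |x k| ≤ |x 0| + k * R := by
  induction k using Nat.strong_induction_on with
  | _ k ih =>
    rcases k with _ | m
    · simp
    calc |x (m + 1)| ≤ R + ∑ i ∈ range (m + 1), |x i| * w (m - i) := hx m
      _ ≤ R + ∑ i ∈ range (m + 1), (|x 0| + m * R) * w (m - i) := by
          gcongr with i hi
          · exact hw0 _
          have him : i ≤ m := Nat.lt_succ_iff.mp (mem_range.mp hi)
          calc |x i| ≤ |x 0| + i * R := ih i (by omega)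
            _ ≤ |x 0| + m * R := by gcongr
      _ = R + (|x 0| + m * R) * ∑ i ∈ range (m + 1), w i := by
          rw [← mul_sum]
          congr 2
          simpa using sum_range_reflect w (m + 1)
      _ ≤ R + (|x 0| + m * R) * 1 := by gcongr; exact hw (m + 1)
      _ = |x 0| + ((m + 1 : ℕ) : ℝ) * R := by push_cast; ring

/-- The factor `1 / ((n - m) (n - m + 1))` of both recursions, indexed by `l = n - m - 1`. -/
noncomputable def bsWeight (l : ℕ) : ℝ := 1 / (((l : ℝ) + 1) * ((l : ℝ) + 2))

lemma bsWeight_nonneg (l : ℕ) : 0 ≤ bsWeight l := by unfold bsWeight; positivity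

lemma bsWeight_eq_sub (l : ℕ) : bsWeight l = 1 / ((l : ℝ) + 1) - 1 / ((l : ℝ) + 2) := by
  unfold bsWeight
  field_simp
  ring

lemma sum_range_bsWeight_le_one (n : ℕ) : ∑ l ∈ range n, bsWeight l ≤ 1 := by
  have htel := sum_range_sub' (fun l : ℕ => 1 / ((l : ℝ) + 1)) n
  simp only [Nat.cast_succ, add_assoc, one_add_one_eq_two, ← bsWeight_eq_sub] at htel
  rw [htel]
  norm_num
  positivity

lemma abs_bsWeight_le (l : ℕ) : |bsWeight l| ≤ 1 * ((l : ℝ) + 1) ^ 0 := by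
  rw [abs_of_nonneg (bsWeight_nonneg l), pow_zero, mul_one, bsWeight, div_le_one (by positivity)]
  nlinarith [(l.cast_nonneg : (0 : ℝ) ≤ l)]

/-- With `L(z) = -log (1 - z) = ∑ z^(l+1)/(l+1)`, the telescoping `bsWeight_eq_sub` gives
`z² ∑ bsWeight l z^l = z L(z) - (L(z) - z)`. -/
lemma mul_one_sub_mul_powerSeriesSum_bsWeight {z : ℝ} (hz : |z| < 1) :
    z * (1 - z * powerSeriesSum bsWeight z) = (1 - z) * -Real.log (1 - z) := by
  have hL := Real.hasSum_pow_div_log_of_abs_lt_one hz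
  have hL' : HasSum (fun l : ℕ => z ^ (l + 2) / ((l : ℝ) + 2)) (-Real.log (1 - z) - z) := by
    have := (hasSum_nat_add_iff' 1).mpr hL
    simpa [add_assoc, one_add_one_eq_two] using this
  have hsum : HasSum (fun l => z ^ 2 * (bsWeight l * z ^ l))
      (z * -Real.log (1 - z) - (-Real.log (1 - z) - z)) := by
    refine ((hL.mul_left z).sub hL').congr_fun fun l => ?_
    rw [bsWeight_eq_sub]
    ring
  have hQ : z ^ 2 * powerSeriesSum bsWeight z
      = z * -Real.log (1 - z) - (-Real.log (1 - z) - z) := by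
    rw [powerSeriesSum, ← tsum_mul_left, hsum.tsum_eq]
  linear_combination -hQ

def BSFirstMomentRec (a : ℕ → ℝ) : Prop :=
  ∀ n : ℕ, 2 ≤ n →
    a n = 1 / ((n : ℝ) - 1)
      + ∑ m ∈ Icc 2 (n - 1),
          (((m : ℝ) - 1) / (((n : ℝ) - 1) * ((n : ℝ) - m) * ((n : ℝ) - m + 1))) * a m

def BSMixedMomentRec (a c : ℕ → ℝ) : Prop :=
  ∀ n : ℕ, 2 ≤ n →
    c n = (2 / ((n : ℝ) - 1)) * a n
      + ∑ m ∈ Icc 3 (n - 1),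
          (((m : ℝ) - 1) * ((m : ℝ) - 2)
              / (((n : ℝ) - 1) ^ 2 * ((n : ℝ) - m) * ((n : ℝ) - m + 1))) * c m

/-- `(n - 1) a n` at `n = k + 2`; the generating function of `bsCoeff c` is `f'`. -/
def bsCoeff (a : ℕ → ℝ) (k : ℕ) : ℝ := ((k : ℝ) + 1) * a (k + 2)

lemma sum_Icc_two_eq_sum_range (f : ℕ → ℝ) (m : ℕ) :
    ∑ j ∈ Icc 2 (m + 2), f j = ∑ i ∈ range (m + 1), f (i + 2) := by
  rw [← Ico_add_one_right_eq_Icc, sum_Ico_eq_sum_range, show m + 2 + 1 - 2 = m + 1 by omega]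
  simp only [add_comm]

lemma sum_Icc_three_eq_sum_range {f : ℕ → ℝ} (hf : f 2 = 0) (m : ℕ) :
    ∑ j ∈ Icc 3 (m + 2), f j = ∑ i ∈ range (m + 1), f (i + 2) := by
  rw [← sum_Icc_two_eq_sum_range, ← add_sum_Ioc_eq_sum_Icc (a := 2) (by omega), hf, zero_add]
  rfl

lemma cast_sub_of_mem_range {i m : ℕ} (h : i ∈ range (m + 1)) : ((m - i : ℕ) : ℝ) = m - i :=
  Nat.cast_sub (Nat.lt_succ_iff.mp (mem_range.mp h))

lemma abs_sum_mul_bsWeight_le (x : ℕ → ℝ) (m : ℕ) :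
    |∑ i ∈ range (m + 1), x i * bsWeight (m - i)|
      ≤ ∑ i ∈ range (m + 1), |x i| * bsWeight (m - i) :=
  (abs_sum_le_sum_abs _ _).trans_eq <| sum_congr rfl fun i _ => by
    rw [abs_mul, abs_of_nonneg (bsWeight_nonneg _)]

section BolthausenSznitman

variable {a c : ℕ → ℝ}

lemma BSFirstMomentRec.bsCoeff_zero (ha : BSFirstMomentRec a) : bsCoeff a 0 = 1 := by
  have h := ha 2 le_rfl
  norm_num at h
  simpa [bsCoeff] using h

lemma BSMixedMomentRec.bsCoeff_zero (hc : BSMixedMomentRec a c) :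
    bsCoeff c 0 = 2 * bsCoeff a 0 := by
  have h := hc 2 le_rfl
  norm_num at h
  simpa [bsCoeff] using h

lemma BSFirstMomentRec.succ_eq_conv (ha : BSFirstMomentRec a) (m : ℕ) :
    bsCoeff a (m + 1) - 1 = ∑ i ∈ range (m + 1), bsCoeff a i * bsWeight (m - i) := by
  rw [bsCoeff, ha (m + 1 + 2) (by omega), show m + 1 + 2 - 1 = m + 2 from rfl,
    sum_Icc_two_eq_sum_range, mul_add, mul_sum]
  push_cast
  have hm : (m : ℝ) + 1 + 1 ≠ 0 := by positivity
  rw [show (m : ℝ) + 1 + 2 - 1 = m + 1 + 1 by ring, mul_one_div_cancel hm, add_sub_cancel_left]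
  refine sum_congr rfl fun i hi => ?_
  rw [bsCoeff, bsWeight, cast_sub_of_mem_range hi]
  field_simp
  ring

lemma BSMixedMomentRec.succ_eq_conv (hc : BSMixedMomentRec a c) (m : ℕ) :
    ((m : ℝ) + 2) * bsCoeff c (m + 1) - 2 * bsCoeff a (m + 1)
      = ∑ i ∈ range (m + 1), (i : ℝ) * bsCoeff c i * bsWeight (m - i) := by
  rw [bsCoeff, hc (m + 1 + 2) (by omega), show m + 1 + 2 - 1 = m + 2 from rfl,
    sum_Icc_three_eq_sum_range (by norm_num), mul_add, mul_sum]
  push_cast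
  rw [show (m : ℝ) + 1 + 2 - 1 = m + 2 by ring]
  have hfirst : ((m : ℝ) + 2) * (((m : ℝ) + 1 + 1) * (2 / ((m : ℝ) + 2) * a (m + 1 + 2)))
      = 2 * bsCoeff a (m + 1) := by
    rw [bsCoeff]
    push_cast
    field_simp
  rw [mul_add, hfirst, add_sub_cancel_left, mul_sum]
  refine sum_congr rfl fun i hi => ?_
  rw [bsCoeff, bsWeight, cast_sub_of_mem_range hi]
  field_simp
  ring

lemma BSFirstMomentRec.abs_bsCoeff_le (ha : BSFirstMomentRec a) (k : ℕ) :
    |bsCoeff a k| ≤ 1 * ((k : ℝ) + 1) ^ 1 := by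
  have hgrowth := abs_le_of_abs_succ_le_add_conv (x := bsCoeff a) zero_le_one bsWeight_nonneg
    sum_range_bsWeight_le_one (fun m => ?_) k
  · rw [ha.bsCoeff_zero, abs_one] at hgrowth
    linarith
  · rw [← sub_add_cancel (bsCoeff a (m + 1)) 1, ha.succ_eq_conv m, add_comm]
    exact (abs_add_le _ _).trans (by rw [abs_one]; gcongr; exact abs_sum_mul_bsWeight_le _ m)

lemma BSMixedMomentRec.abs_bsCoeff_le (ha : BSFirstMomentRec a) (hc : BSMixedMomentRec a c)
    (k : ℕ) : |bsCoeff c k| ≤ 2 * ((k : ℝ) + 1) ^ 1 := by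
  have hgrowth := abs_le_of_abs_succ_le_add_conv (x := bsCoeff c) zero_le_two bsWeight_nonneg
    sum_range_bsWeight_le_one (fun m => ?_) k
  · rw [hc.bsCoeff_zero, ha.bsCoeff_zero] at hgrowth
    norm_num at hgrowth
    linarith
  · set S := ∑ i ∈ range (m + 1), |bsCoeff c i| * bsWeight (m - i)
    have hm : (0 : ℝ) < m + 2 := by positivity
    have hconv :
        |∑ i ∈ range (m + 1), (i : ℝ) * bsCoeff c i * bsWeight (m - i)| ≤ (m + 2) * S := by
      rw [mul_sum]
      refine (abs_sum_le_sum_abs _ _).trans (sum_le_sum fun i hi => ?_)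
      have him : (i : ℝ) ≤ m := by exact_mod_cast Nat.lt_succ_iff.mp (mem_range.mp hi)
      rw [abs_mul, abs_mul, Nat.abs_cast, abs_of_nonneg (bsWeight_nonneg _), mul_assoc]
      exact mul_le_mul_of_nonneg_right (by linarith)
        (mul_nonneg (abs_nonneg _) (bsWeight_nonneg _))
    have ha' : |bsCoeff a (m + 1)| ≤ m + 2 := by
      have := ha.abs_bsCoeff_le (m + 1)
      push_cast at this
      linarith
    rw [← mul_le_mul_iff_of_pos_left hm]
    calc ((m : ℝ) + 2) * |bsCoeff c (m + 1)|
        = |2 * bsCoeff a (m + 1)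
            + ∑ i ∈ range (m + 1), (i : ℝ) * bsCoeff c i * bsWeight (m - i)| := by
          rw [← hc.succ_eq_conv m, ← abs_of_pos hm, ← abs_mul, abs_of_pos hm]
          congr 1
          ring
      _ ≤ 2 * |bsCoeff a (m + 1)| + (m + 2) * S := by
          refine (abs_add_le _ _).trans (add_le_add (le_of_eq ?_) hconv)
          rw [abs_mul, abs_two]
      _ ≤ (m + 2) * (2 + S) := by nlinarith

lemma BSMixedMomentRec.abs_le_two (ha : BSFirstMomentRec a) (hc : BSMixedMomentRec a c)
    (k : ℕ) : |c (k + 2)| ≤ 2 := by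
  have h := hc.abs_bsCoeff_le ha k
  rw [bsCoeff, abs_mul, abs_of_nonneg (by positivity), pow_one] at h
  nlinarith

lemma BSFirstMomentRec.powerSeriesSum_mul_eq (ha : BSFirstMomentRec a) {z : ℝ} (hz : |z| < 1) :
    powerSeriesSum (bsCoeff a) z * ((1 - z) * -Real.log (1 - z)) = z / (1 - z) := by
  have hα := summable_norm_mul_pow_s15 ha.abs_bsCoeff_le hz
  have hgeom : Summable fun k : ℕ => (1 : ℝ) * z ^ k := by
    simpa using summable_geometric_of_abs_lt_one hz
  have hconv := powerSeriesSum_eq_add_mul_mul_of_conv (x := fun k => bsCoeff a k - 1)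
    hα (summable_norm_mul_pow_s15 abs_bsWeight_le hz) ha.succ_eq_conv
  have hgeom_sum : powerSeriesSum (fun _ => 1) z = (1 - z)⁻¹ := by
    simpa [powerSeriesSum] using tsum_geometric_of_abs_lt_one hz
  rw [powerSeriesSum_sub hα.of_norm hgeom, hgeom_sum, ha.bsCoeff_zero, sub_self, zero_add] at hconv
  rw [← mul_one_sub_mul_powerSeriesSum_bsWeight hz, div_eq_mul_inv]
  linear_combination z * hconv

lemma BSMixedMomentRec.powerSeriesSum_add_mul_deriv_eq (ha : BSFirstMomentRec a)
    (hc : BSMixedMomentRec a c) {z : ℝ} (hz : |z| < 1) :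
    powerSeriesSum (bsCoeff c) z
        + (1 - z) * -Real.log (1 - z) * deriv (powerSeriesSum (bsCoeff c)) z
      = 2 * powerSeriesSum (bsCoeff a) z := by
  have hγ := hc.abs_bsCoeff_le ha
  have hkγ : ∀ k : ℕ, |(k : ℝ) * bsCoeff c k| ≤ 2 * ((k : ℝ) + 1) ^ 2 := fun k => by
    rw [abs_mul, Nat.abs_cast]
    nlinarith [hγ k, abs_nonneg (bsCoeff c k)]
  have sγ := (summable_norm_mul_pow_s15 hγ hz).of_norm
  have skγ := summable_norm_mul_pow_s15 hkγ hz
  have s2α : Summable fun k : ℕ => 2 * bsCoeff a k * z ^ k :=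
    ((summable_norm_mul_pow_s15 ha.abs_bsCoeff_le hz).of_norm.mul_left 2).congr fun k => by ring
  have hzD : powerSeriesSum (fun k => (k : ℝ) * bsCoeff c k) z
      = z * powerSeriesSum (fun k => ((k : ℝ) + 1) * bsCoeff c (k + 1)) z := by
    rw [powerSeriesSum_eq_add_mul skγ.of_norm]
    simp
  have hconv := powerSeriesSum_eq_add_mul_mul_of_conv
    (x := fun k => (bsCoeff c k + (k : ℝ) * bsCoeff c k) - 2 * bsCoeff a k)
    skγ (summable_norm_mul_pow_s15 abs_bsWeight_le hz)
    (fun m => by rw [← hc.succ_eq_conv m]; push_cast; ring)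
  rw [powerSeriesSum_sub ((sγ.add skγ.of_norm).congr fun k => by ring) s2α,
    powerSeriesSum_add sγ skγ.of_norm, powerSeriesSum_const_mul, hzD, hc.bsCoeff_zero] at hconv
  rw [(hasDerivAt_powerSeriesSum hγ hz).deriv, ← mul_one_sub_mul_powerSeriesSum_bsWeight hz]
  norm_num at hconv
  linear_combination hconv

lemma hasDerivAt_neg_log_one_sub {t : ℝ} (ht : t < 1) :
    HasDerivAt (fun s => -Real.log (1 - s)) (1 / (1 - t)) t := by
  refine (((hasDerivAt_id' t).const_sub 1).log (by linarith)).neg.congr_deriv ?_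
  ring

lemma BSMixedMomentRec.hasDerivAt_neg_log_mul (ha : BSFirstMomentRec a)
    (hc : BSMixedMomentRec a c) {t : ℝ} (ht0 : 0 < t) (ht1 : t < 1) :
    HasDerivAt (fun s => -Real.log (1 - s) * powerSeriesSum (bsCoeff c) s)
      (2 * (t / ((1 - t) ^ 3 * -Real.log (1 - t)))) t := by
  have ht : |t| < 1 := abs_lt.mpr ⟨by linarith, ht1⟩
  have hG := (hasDerivAt_powerSeriesSum (hc.abs_bsCoeff_le ha) ht).differentiableAt.hasDerivAt
  refine ((hasDerivAt_neg_log_one_sub ht1).mul hG).congr_deriv ?_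
  have hL : 0 < -Real.log (1 - t) := neg_pos.mpr (Real.log_neg (by linarith) (by linarith))
  have h1t : (1 : ℝ) - t ≠ 0 := by linarith
  have hA : powerSeriesSum (bsCoeff a) t = t / ((1 - t) ^ 2 * -Real.log (1 - t)) := by
    have h := ha.powerSeriesSum_mul_eq ht
    rw [eq_div_iff h1t] at h
    rw [eq_div_iff (by positivity)]
    linear_combination h
  calc 1 / (1 - t) * powerSeriesSum (bsCoeff c) t
        + -Real.log (1 - t) * deriv (powerSeriesSum (bsCoeff c)) t
      = (powerSeriesSum (bsCoeff c) t
        + (1 - t) * -Real.log (1 - t) * deriv (powerSeriesSum (bsCoeff c)) t) / (1 - t) := by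
        field_simp
    _ = 2 * (t / ((1 - t) ^ 3 * -Real.log (1 - t))) := by
      rw [hc.powerSeriesSum_add_mul_deriv_eq ha ht, hA]
      field_simp

lemma BSMixedMomentRec.integral_eq (ha : BSFirstMomentRec a) (hc : BSMixedMomentRec a c)
    {z : ℝ} (hz0 : 0 < z) (hz1 : z < 1) :
    ∫ t in (0 : ℝ)..z, t / ((1 - t) ^ 3 * -Real.log (1 - t))
      = -Real.log (1 - z) * powerSeriesSum (bsCoeff c) z / 2 := by
  have hcont : ContinuousOn (fun s => -Real.log (1 - s) * powerSeriesSum (bsCoeff c) s)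
      (Set.Icc 0 z) := fun s ⟨hs0, hsz⟩ =>
    ((hasDerivAt_neg_log_one_sub (by linarith)).continuousAt.mul
      (hasDerivAt_powerSeriesSum (hc.abs_bsCoeff_le ha)
        (abs_lt.mpr ⟨by linarith, by linarith⟩)).continuousAt).continuousWithinAt
  have hderiv : ∀ t ∈ Set.Ioo 0 z,
      HasDerivAt (fun s => -Real.log (1 - s) * powerSeriesSum (bsCoeff c) s)
        (2 * (t / ((1 - t) ^ 3 * -Real.log (1 - t)))) t :=
    fun t ⟨ht0, htz⟩ => hc.hasDerivAt_neg_log_mul ha ht0 (htz.trans hz1)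
  have hint := intervalIntegrable_deriv_of_nonneg
    (g' := fun t => 2 * (t / ((1 - t) ^ 3 * -Real.log (1 - t)))) (by rwa [Set.uIcc_of_le hz0.le])
    (fun t ht => hderiv t (by simpa [hz0.le] using ht)) (fun t ht => ?_)
  · have hFTC := integral_eq_sub_of_hasDerivAt_of_le hz0.le hcont hderiv hint
    rw [intervalIntegral.integral_const_mul] at hFTC
    simp only [sub_zero, Real.log_one, neg_zero, zero_mul] at hFTC
    linarith
  · simp only [hz0.le, min_eq_left, max_eq_right, Set.mem_Ioo] at ht
    have hL : 0 < -Real.log (1 - t) := neg_pos.mpr (Real.log_neg (by linarith) (by linarith))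
    have h1t : 0 < 1 - t := by linarith
    exact mul_nonneg zero_le_two (div_nonneg ht.1.le (mul_pos (pow_pos h1t 3) hL).le)

end BolthausenSznitman

/-- For the Bolthausen–Sznitman coalescent the generating function
`f(z) = Σ_{n≥2} c_n z^{n-1}` of the mixed moments `c_n = E(τ_{n,1}τ_{n,2})`
converges for `|z| < 1` and satisfies
`f'(z) = (2/L(z)) ∫₀^z t/((1-t)³ L(t)) dt` with `L(z) = -log(1-z)`. -/
theorem bolthausen_sznitman_f11 (a c : ℕ → ℝ)
    (ha : ∀ n : ℕ, 2 ≤ n →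
      a n = 1 / ((n : ℝ) - 1)
        + ∑ m ∈ Finset.Icc 2 (n - 1),
            (((m : ℝ) - 1) / (((n : ℝ) - 1) * ((n : ℝ) - (m : ℝ)) * ((n : ℝ) - (m : ℝ) + 1)))
              * a m)
    (hc : ∀ n : ℕ, 2 ≤ n →
      c n = (2 / ((n : ℝ) - 1)) * a n
        + ∑ m ∈ Finset.Icc 3 (n - 1),
            (((m : ℝ) - 1) * ((m : ℝ) - 2)
                / (((n : ℝ) - 1) ^ 2 * ((n : ℝ) - (m : ℝ)) * ((n : ℝ) - (m : ℝ) + 1)))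
              * c m) :
    (∀ z : ℝ, |z| < 1 → Summable (fun n : ℕ => c (n + 2) * z ^ (n + 1))) ∧
    (∀ z : ℝ, 0 < z → z < 1 →
      deriv (fun s : ℝ => ∑' n : ℕ, c (n + 2) * s ^ (n + 1)) z
        = (2 / (-Real.log (1 - z)))
            * ∫ t in (0:ℝ)..z, t / ((1 - t) ^ 3 * (-Real.log (1 - t)))) := by
  have hc_le : ∀ k : ℕ, |c (k + 2)| ≤ 2 * ((k : ℝ) + 1) ^ 0 := fun k => by
    simpa using BSMixedMomentRec.abs_le_two ha hc k
  refine ⟨fun z hz => ((summable_norm_mul_pow_s15 hc_le hz).of_norm.mul_left z).congr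
    fun n => by ring, fun z hz0 hz1 => ?_⟩
  have hL : Real.log (1 - z) ≠ 0 := (Real.log_neg (by linarith) (by linarith)).ne
  rw [(hasDerivAt_tsum_mul_pow_succ hc_le (abs_lt.mpr ⟨by linarith, hz1⟩)).deriv]
  change powerSeriesSum (bsCoeff c) z = _
  rw [BSMixedMomentRec.integral_eq ha hc hz0 hz1]
  field_simp
end

section
/- Let (a_n)_{n≥2} satisfy a_n = 1/(n−1) + Σ_{m=2}^{n−1} ((m−1)/((n−1)(n−m)(n−m+1))) a_m for all n ≥ 2, and let (c_n)_{n≥2} satisfy c_n = (2/(n−1)) a_n + Σ_{m=3}^{n−1} ((m−1)(m−2)/((n−1)²(n−m)(n−m+1))) c_m for all n ≥ 2. Then for every n ≥ 2, c_n = (2/(n−1)!) Σ_{k=1}^{n−1} ((2^k − 1)/k²) s(n−2, k−1), where s(i,k) denotes the unsigned Stirling numbers of the first kind, i.e. the coefficients in x(x+1)⋯(x+i−1) = Σ_{k=0}^i s(i,k) x^k (with s(0,0)=1). -/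
/-!
Let `R t = x(x+1)⋯(x+t-1)/t!` (`multichoosePoly t`) and let `phi`, `psi` be the linear
functionals on `ℝ[X]` with `phi (x^k) = (2^(k+1)-1)/(k+1) = ∫₁² x^k dx` and
`psi (x^k) = phi (x^k)/(k+1)`. Then `a_n = phi (R (n-2))/(n-1)` and `c_n = 2 psi (R (n-2))/(n-1)`,
and expanding `R (n-2)` in the Stirling numbers gives the formula. Since the recursions determine
`a` and `c`, it suffices to check that these candidates satisfy them. Splitting
`1/((j-u)(j-u+1)) = 1/(j-u) - 1/(j+1-u)` reduces this to `∑_{t<j} phi (R t)/(j-t) = j` and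
`∑_{t<j} t psi (R t)/(j-t) = ∑_{t<j} (phi - psi) (R t)`. These are `phi` and `psi` applied to
`R_j' = ∑_{t<j} R_t/(j-t)` and to its shift by one, using `phi p' = p(2) - p(1)`,
`psi (x p') = phi p - psi p` and the hockey-stick identity `R_j(x+1) = ∑_{t≤j} R_t(x)`.
-/

open Polynomial Finset
open scoped Nat

namespace BolthausenSznitman

lemma sum_Icc_eq_sum_range {M : Type*} [AddCommMonoid M] (f : ℕ → M) (a b : ℕ) :
    ∑ m ∈ Icc a b, f m = ∑ u ∈ range (b + 1 - a), f (a + u) := by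
  rw [← Ico_add_one_right_eq_Icc, sum_Ico_eq_sum_range]

lemma sum_div_mul_sub_add_one (x : ℕ → ℝ) (j : ℕ) :
    ∑ u ∈ range j, x u / (((j : ℝ) - u) * ((j : ℝ) - u + 1))
      = ∑ u ∈ range j, x u / ((j : ℝ) - u)
        - ∑ u ∈ range (j + 1), x u / (((j + 1 : ℕ) : ℝ) - u) + x j := by
  rw [sum_range_succ, Nat.cast_succ, add_sub_cancel_left, div_one, sub_add_eq_sub_sub,
    sub_add_cancel, ← sum_sub_distrib]
  refine sum_congr rfl fun u hu => ?_
  have hju : (j : ℝ) - u ≠ 0 := sub_ne_zero.mpr (by exact_mod_cast (mem_range.mp hu).ne')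
  have hju' : (j : ℝ) - u + 1 ≠ 0 := by
    have : (u : ℝ) < j := by exact_mod_cast mem_range.mp hu
    linarith
  rw [show (j : ℝ) + 1 - u = (j : ℝ) - u + 1 by ring]
  field_simp
  ring

lemma eq_of_recursion {R : Type*} [AddCommMonoid R] [Mul R] {x y f : ℕ → R} {K : ℕ → ℕ → R}
    {l : ℕ} (hl : 2 ≤ l)
    (hx : ∀ n, 2 ≤ n → x n = f n + ∑ m ∈ Icc l (n - 1), K n m * x m)
    (hy : ∀ n, 2 ≤ n → y n = f n + ∑ m ∈ Icc l (n - 1), K n m * y m) :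
    ∀ n, 2 ≤ n → x n = y n := by
  intro n
  induction n using Nat.strong_induction_on with
  | _ n ih =>
    intro hn
    rw [hx n hn, hy n hn]
    refine congrArg _ (sum_congr rfl fun m hm => ?_)
    rw [mem_Icc] at hm
    rw [ih m (by omega) (by omega)]

lemma ascPochhammer_eval_eq_prod_range {S : Type*} [CommSemiring S] (n : ℕ) (x : S) :
    (ascPochhammer S n).eval x = ∏ r ∈ range n, (x + r) := by
  induction n with
  | zero => simp
  | succ n ih => rw [ascPochhammer_succ_eval, ih, prod_range_succ]

noncomputable def multichoosePoly (t : ℕ) : ℝ[X] := (t ! : ℝ)⁻¹ • ascPochhammer ℝ t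

@[simp]
lemma multichoosePoly_zero : multichoosePoly 0 = 1 := by simp [multichoosePoly]

lemma succ_smul_multichoosePoly_succ (t : ℕ) :
    ((t : ℝ) + 1) • multichoosePoly (t + 1) = (X + C (t : ℝ)) * multichoosePoly t := by
  simp only [multichoosePoly, smul_smul, Nat.factorial_succ, ascPochhammer_succ_right,
    mul_smul_comm, Nat.cast_mul]
  rw [mul_comm (ascPochhammer ℝ t), ← C_eq_natCast]
  congr 1
  field_simp
  push_cast; ring

lemma succ_smul_multichoosePoly_succ_eq_X_mul_comp (t : ℕ) :
    ((t : ℝ) + 1) • multichoosePoly (t + 1) = X * (multichoosePoly t).comp (X + 1) := by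
  simp only [multichoosePoly, smul_smul, Nat.factorial_succ, ascPochhammer_succ_left,
    mul_smul_comm, smul_comp, Nat.cast_mul]
  congr 1
  field_simp
  push_cast; ring

lemma multichoosePoly_comp_X_add_one (j : ℕ) :
    (multichoosePoly j).comp (X + 1) = ∑ t ∈ range (j + 1), multichoosePoly t := by
  induction j with
  | zero => simp
  | succ j ih =>
    rw [sum_range_succ, ← ih]
    simp only [multichoosePoly, smul_comp, ascPochhammer_succ_comp_X_add_one, smul_add]
    rw [Nat.factorial_succ, add_comm]
    congr 1
    rw [← Nat.cast_smul_eq_nsmul ℝ, smul_smul]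
    congr 1
    field_simp
    push_cast; ring

@[simp]
lemma multichoosePoly_eval_one (j : ℕ) : (multichoosePoly j).eval 1 = 1 := by
  simp [multichoosePoly, Nat.factorial_ne_zero]

lemma multichoosePoly_eval_two (j : ℕ) : (multichoosePoly j).eval 2 = j + 1 := by
  have h := congrArg (eval 1) (multichoosePoly_comp_X_add_one j)
  rw [eval_comp, eval_finsetSum] at h
  simpa [one_add_one_eq_two] using h

lemma X_add_C_mul_multichoosePoly (j t : ℕ) :
    (X + C (j : ℝ)) * multichoosePoly t
      = ((t : ℝ) + 1) • multichoosePoly (t + 1) + ((j : ℝ) - t) • multichoosePoly t := by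
  rw [succ_smul_multichoosePoly_succ, smul_eq_C_mul, C_sub]
  ring

lemma derivative_multichoosePoly (j : ℕ) :
    derivative (multichoosePoly j) = ∑ t ∈ range j, ((j : ℝ) - t)⁻¹ • multichoosePoly t := by
  induction j with
  | zero => simp
  | succ j ih =>
    have hj : ((j : ℝ) + 1) ≠ 0 := by positivity
    apply smul_right_injective _ hj
    have hsplit : ∀ t ∈ range (j + 1),
        ((j : ℝ) + 1) • ((((j + 1 : ℕ) : ℝ) - t)⁻¹ • multichoosePoly t)
          = ((t : ℝ) / ((j + 1 : ℕ) - t)) • multichoosePoly t + multichoosePoly t := by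
      intro t ht
      have hjt : ((j + 1 : ℕ) : ℝ) - t ≠ 0 :=
        sub_ne_zero.mpr (by exact_mod_cast (mem_range.mp ht).ne')
      push_cast at hjt ⊢
      match_scalars
      field_simp
      ring
    dsimp only
    calc ((j : ℝ) + 1) • derivative (multichoosePoly (j + 1))
        = derivative ((X + C (j : ℝ)) * multichoosePoly j) := by
          rw [← derivative_smul, succ_smul_multichoosePoly_succ]
      _ = ∑ t ∈ range j, ((((t : ℝ) + 1) / ((j : ℝ) - t)) • multichoosePoly (t + 1)
            + multichoosePoly t) + multichoosePoly j := by
          rw [derivative_mul, ih, derivative_add, derivative_X, derivative_C, add_zero, one_mul,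
            add_comm, mul_sum]
          refine congrArg (· + _) (sum_congr rfl fun t ht => ?_)
          have hjt : (j : ℝ) - t ≠ 0 := sub_ne_zero.mpr (by exact_mod_cast (mem_range.mp ht).ne')
          rw [mul_smul_comm, X_add_C_mul_multichoosePoly]
          match_scalars <;> field_simp
      _ = ((j : ℝ) + 1) • ∑ t ∈ range (j + 1), ((((j + 1 : ℕ) : ℝ) - t)⁻¹ • multichoosePoly t) := by
          rw [smul_sum, sum_congr rfl hsplit]
          simp only [sum_add_distrib]
          rw [sum_range_succ' (fun t : ℕ => ((t : ℝ) / ((j + 1 : ℕ) - t)) • multichoosePoly t),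
            sum_range_succ (fun t => multichoosePoly t) j]
          simp only [Nat.cast_zero, zero_div, zero_smul, add_zero, Nat.cast_add, Nat.cast_one,
            add_sub_add_right_eq_sub, add_assoc]

lemma sum_smul_multichoosePoly_eq_X_mul_sum_derivative (j : ℕ) :
    ∑ t ∈ range j, ((t : ℝ) / ((j : ℝ) - t)) • multichoosePoly t
      = X * ∑ t ∈ range j, derivative (multichoosePoly t) := by
  cases j with
  | zero => simp
  | succ j =>
    have hterm : ∀ u ∈ range j,
        (((u + 1 : ℕ) : ℝ) / ((j + 1 : ℕ) - (u + 1 : ℕ))) • multichoosePoly (u + 1)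
          = X * (((j : ℝ) - u)⁻¹ • multichoosePoly u).comp (X + 1) := by
      intro u _
      rw [smul_comp, mul_smul_comm, ← succ_smul_multichoosePoly_succ_eq_X_mul_comp, smul_smul]
      congr 1
      push_cast
      ring
    rw [sum_range_succ', sum_congr rfl hterm, ← mul_sum, ← Polynomial.sum_comp,
      ← derivative_multichoosePoly, ← map_sum, ← multichoosePoly_comp_X_add_one, derivative_comp]
    simp

noncomputable def coeffFunctional (w : ℕ → ℝ) : ℝ[X] →ₗ[ℝ] ℝ :=
  lsum fun k => w k • LinearMap.id

@[simp]
lemma coeffFunctional_monomial (w : ℕ → ℝ) (n : ℕ) (a : ℝ) :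
    coeffFunctional w (monomial n a) = w n * a := by
  simp [coeffFunctional]

lemma coeffFunctional_eq_sum_of_eval_eq (w : ℕ → ℝ) {p : ℝ[X]} {c : ℕ → ℝ} {N : ℕ}
    (h : ∀ x, p.eval x = ∑ k ∈ range N, c k * x ^ k) :
    coeffFunctional w p = ∑ k ∈ range N, c k * w k := by
  have hp : p = ∑ k ∈ range N, monomial k (c k) := by
    refine Polynomial.funext fun x => ?_
    simp [h, eval_finsetSum]
  simp [hp, map_sum, mul_comm]

-- `phi p = ∫₁² p(x) dx` and `psi p = ∫₁² ∫₀¹ p(xy) dy dx`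
noncomputable def phi : ℝ[X] →ₗ[ℝ] ℝ := coeffFunctional fun k => (2 ^ (k + 1) - 1) / (k + 1)

noncomputable def psi : ℝ[X] →ₗ[ℝ] ℝ :=
  coeffFunctional fun k => (2 ^ (k + 1) - 1) / (k + 1) ^ 2

lemma phi_derivative (p : ℝ[X]) : phi (derivative p) = p.eval 2 - p.eval 1 := by
  induction p using Polynomial.induction_on' with
  | add p q hp hq => simp only [map_add, hp, hq, eval_add]; ring
  | monomial n a =>
    cases n with
    | zero => simp
    | succ n =>
      simp only [phi, derivative_monomial, coeffFunctional_monomial, eval_monomial,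
        Nat.add_sub_cancel]
      field_simp
      push_cast
      ring

lemma psi_X_mul_derivative (p : ℝ[X]) : psi (X * derivative p) = phi p - psi p := by
  induction p using Polynomial.induction_on' with
  | add p q hp hq => simp only [map_add, mul_add, hp, hq]; ring
  | monomial n a =>
    cases n with
    | zero =>
      simp only [phi, psi, derivative_monomial, coeffFunctional_monomial, Nat.cast_zero,
        mul_zero, map_zero]
      norm_num
    | succ n =>
      simp only [phi, psi, derivative_monomial, X_mul_monomial, coeffFunctional_monomial,
        Nat.add_sub_cancel]
      field_simp
      push_cast
      ring

lemma sum_phi_multichoosePoly_div (j : ℕ) :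
    ∑ t ∈ range j, phi (multichoosePoly t) / ((j : ℝ) - t) = j := by
  have h := congrArg phi (derivative_multichoosePoly j)
  simp only [phi_derivative, multichoosePoly_eval_two, multichoosePoly_eval_one, map_sum,
    map_smul, smul_eq_mul, inv_mul_eq_div, add_sub_cancel_right] at h
  exact h.symm

lemma sum_mul_psi_multichoosePoly_div (j : ℕ) :
    ∑ t ∈ range j, t * psi (multichoosePoly t) / ((j : ℝ) - t)
      = ∑ t ∈ range j, (phi (multichoosePoly t) - psi (multichoosePoly t)) := by
  have h := congrArg psi (sum_smul_multichoosePoly_eq_X_mul_sum_derivative j)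
  simp only [mul_sum, map_sum, map_smul, smul_eq_mul, psi_X_mul_derivative] at h
  rw [← h]
  exact sum_congr rfl fun t _ => by ring

lemma phi_multichoosePoly_eq_one_add_sum (j : ℕ) :
    phi (multichoosePoly j)
      = 1 + ∑ u ∈ range j, phi (multichoosePoly u) / (((j : ℝ) - u) * ((j : ℝ) - u + 1)) := by
  rw [sum_div_mul_sub_add_one, sum_phi_multichoosePoly_div, sum_phi_multichoosePoly_div]
  push_cast
  ring

lemma succ_mul_psi_multichoosePoly_eq_phi_add_sum (j : ℕ) :
    ((j : ℝ) + 1) * psi (multichoosePoly j)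
      = phi (multichoosePoly j)
        + ∑ u ∈ range j, u * psi (multichoosePoly u) / (((j : ℝ) - u) * ((j : ℝ) - u + 1)) := by
  rw [sum_div_mul_sub_add_one (fun u => u * psi (multichoosePoly u)),
    sum_mul_psi_multichoosePoly_div, sum_mul_psi_multichoosePoly_div, sum_range_succ]
  ring

noncomputable def firstMoment (n : ℕ) : ℝ := phi (multichoosePoly (n - 2)) / ((n : ℝ) - 1)

noncomputable def mixedMoment (n : ℕ) : ℝ := 2 * psi (multichoosePoly (n - 2)) / ((n : ℝ) - 1)

lemma firstMoment_eq (n : ℕ) (hn : 2 ≤ n) :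
    firstMoment n = 1 / ((n : ℝ) - 1)
      + ∑ m ∈ Icc 2 (n - 1),
          (((m : ℝ) - 1) / (((n : ℝ) - 1) * ((n : ℝ) - m) * ((n : ℝ) - m + 1)))
            * firstMoment m := by
  obtain ⟨j, rfl⟩ := Nat.exists_eq_add_of_le' hn
  have hn₁ : ((j + 2 : ℕ) : ℝ) - 1 = j + 1 := by push_cast; ring
  have hm₁ : ∀ u : ℕ, ((2 + u : ℕ) : ℝ) - 1 = u + 1 := fun u => by push_cast; ring
  have hnm : ∀ u : ℕ, ((j + 2 : ℕ) : ℝ) - (2 + u : ℕ) = j - u := fun u => by push_cast; ring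
  rw [show j + 2 - 1 = j + 1 by omega, sum_Icc_eq_sum_range, show j + 1 + 1 - 2 = j by omega]
  simp only [firstMoment, Nat.add_sub_cancel, Nat.add_sub_cancel_left, hn₁, hm₁, hnm]
  rw [phi_multichoosePoly_eq_one_add_sum j, add_div, sum_div]
  congr 1
  refine sum_congr rfl fun u hu => ?_
  have hu : (u : ℝ) < j := by exact_mod_cast mem_range.mp hu
  have : (j : ℝ) - u ≠ 0 := by linarith
  have : (j : ℝ) - u + 1 ≠ 0 := by linarith
  field_simp

lemma mixedMoment_eq (n : ℕ) (hn : 2 ≤ n) :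
    mixedMoment n = (2 / ((n : ℝ) - 1)) * firstMoment n
      + ∑ m ∈ Icc 3 (n - 1),
          (((m : ℝ) - 1) * ((m : ℝ) - 2) / (((n : ℝ) - 1) ^ 2 * ((n : ℝ) - m) * ((n : ℝ) - m + 1)))
            * mixedMoment m := by
  obtain ⟨j, rfl⟩ := Nat.exists_eq_add_of_le' hn
  have hn₁ : ((j + 2 : ℕ) : ℝ) - 1 = j + 1 := by push_cast; ring
  have hm₁ : ∀ u : ℕ, ((2 + u : ℕ) : ℝ) - 1 = u + 1 := fun u => by push_cast; ring
  have hm₂ : ∀ u : ℕ, ((2 + u : ℕ) : ℝ) - 2 = u := fun u => by push_cast; ring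
  have hnm : ∀ u : ℕ, ((j + 2 : ℕ) : ℝ) - (2 + u : ℕ) = j - u := fun u => by push_cast; ring
  -- the term `m = 2` vanishes
  rw [show j + 2 - 1 = j + 1 by omega, sum_subset (Icc_subset_Icc_left (by norm_num : 2 ≤ 3))
    fun m hm hm' => by simp [show m = 2 by simp at hm hm'; omega], sum_Icc_eq_sum_range,
    show j + 1 + 1 - 2 = j by omega]
  simp only [firstMoment, mixedMoment, Nat.add_sub_cancel, Nat.add_sub_cancel_left, hn₁, hm₁,
    hm₂, hnm]
  have hj : (j : ℝ) + 1 ≠ 0 := by positivity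
  have key := succ_mul_psi_multichoosePoly_eq_phi_add_sum j
  rw [mul_comm, ← eq_div_iff hj] at key
  rw [key]
  simp only [add_div, mul_add, sum_div, mul_sum]
  congr 1
  · ring
  refine sum_congr rfl fun u hu => ?_
  have hu : (u : ℝ) < j := by exact_mod_cast mem_range.mp hu
  have : (j : ℝ) - u ≠ 0 := by linarith
  have : (j : ℝ) - u + 1 ≠ 0 := by linarith
  field_simp

lemma psi_multichoosePoly_eq_sum {s : ℕ → ℝ} {j : ℕ}
    (hs : ∀ x : ℝ, ∏ r ∈ range j, (x + r) = ∑ k ∈ range (j + 1), s k * x ^ k) :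
    psi (multichoosePoly j)
      = (j ! : ℝ)⁻¹ * ∑ k ∈ range (j + 1), s k * ((2 ^ (k + 1) - 1) / ((k : ℝ) + 1) ^ 2) := by
  rw [multichoosePoly, map_smul, smul_eq_mul, psi,
    coeffFunctional_eq_sum_of_eval_eq _ fun x =>
      (ascPochhammer_eval_eq_prod_range j x).trans (hs x)]

lemma mixedMoment_eq_sum {s : ℕ → ℕ → ℝ}
    (hs : ∀ i : ℕ, ∀ x : ℝ, ∏ r ∈ range i, (x + r) = ∑ k ∈ range (i + 1), s i k * x ^ k)
    (n : ℕ) (hn : 2 ≤ n) :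
    mixedMoment n = (2 / ((n - 1)! : ℝ))
      * ∑ k ∈ Icc 1 (n - 1), ((2 ^ k - 1 : ℝ) / (k : ℝ) ^ 2) * s (n - 2) (k - 1) := by
  obtain ⟨j, rfl⟩ := Nat.exists_eq_add_of_le' hn
  rw [mixedMoment, Nat.add_sub_cancel, psi_multichoosePoly_eq_sum (hs j),
    show j + 2 - 1 = j + 1 by omega, sum_Icc_eq_sum_range, show j + 1 + 1 - 1 = j + 1 by omega,
    mul_sum, mul_sum, mul_sum, sum_div]
  refine sum_congr rfl fun k _ => ?_
  rw [Nat.factorial_succ, add_tsub_cancel_left,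
    show ((j + 2 : ℕ) : ℝ) - 1 = j + 1 by push_cast; ring]
  push_cast
  field_simp
  ring

end BolthausenSznitman

/-- Corollary 3.2: exact formula for `E(τ_{n,1}τ_{n,2})` for the
Bolthausen–Sznitman coalescent in terms of the unsigned Stirling numbers of
the first kind, `c_n = (2/(n-1)!) Σ_{k=1}^{n-1} ((2^k-1)/k²) s(n-2,k-1)`. -/
theorem bolthausen_sznitman_mixed_moment_exact (a c : ℕ → ℝ) (s : ℕ → ℕ → ℝ)
    (ha : ∀ n : ℕ, 2 ≤ n →
      a n = 1 / ((n : ℝ) - 1)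
        + ∑ m ∈ Finset.Icc 2 (n - 1),
            (((m : ℝ) - 1) / (((n : ℝ) - 1) * ((n : ℝ) - (m : ℝ)) * ((n : ℝ) - (m : ℝ) + 1)))
              * a m)
    (hc : ∀ n : ℕ, 2 ≤ n →
      c n = (2 / ((n : ℝ) - 1)) * a n
        + ∑ m ∈ Finset.Icc 3 (n - 1),
            (((m : ℝ) - 1) * ((m : ℝ) - 2)
                / (((n : ℝ) - 1) ^ 2 * ((n : ℝ) - (m : ℝ)) * ((n : ℝ) - (m : ℝ) + 1)))
              * c m)
    -- `s i k` are the coefficients of the rising factorial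
    -- `x(x+1)⋯(x+i-1) = Σ_{k=0}^i s(i,k) x^k`
    (hs : ∀ i : ℕ, ∀ x : ℝ,
      ∏ r ∈ Finset.range i, (x + (r : ℝ)) = ∑ k ∈ Finset.range (i + 1), s i k * x ^ k) :
    ∀ n : ℕ, 2 ≤ n →
      c n = (2 / (Nat.factorial (n - 1) : ℝ))
        * ∑ k ∈ Finset.Icc 1 (n - 1), ((2 ^ k - 1 : ℝ) / (k : ℝ) ^ 2) * s (n - 2) (k - 1) := by
  open BolthausenSznitman in
  have ha' : ∀ n, 2 ≤ n → a n = firstMoment n := eq_of_recursion le_rfl ha firstMoment_eq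
  open BolthausenSznitman in
  have hc' : ∀ n, 2 ≤ n → c n = mixedMoment n := eq_of_recursion (by norm_num) hc fun n hn => by
    rw [ha' n hn]
    exact mixedMoment_eq n hn
  exact fun n hn => (hc' n hn).trans (BolthausenSznitman.mixedMoment_eq_sum hs n hn)
end
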